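/- arXiv:1002.1541 — 8 statements merged into one kernel-verified Lean document; each statement's English description precedes it below -/
import Mathlib

section
/- Let n ≥ 2 and let A be an (n×n) real matrix. For vectors e₁, …, e_{n−1} ∈ ℝⁿ, the sum over i from 1 to n−1 of the generalized cross product e₁ × ⋯ × e_{i−1} × (A eᵢ) × e_{i+1} × ⋯ × e_{n−1} equals (tr(A) I − Aᵀ) applied to e₁ × ⋯ × e_{n−1}. -/
/-!
By Cramer's rule, replacing row `j` of a square matrix `M` by `A (M j)` gives the determinant
`(adj Mᵀ · A · Mᵀ)ⱼⱼ`, so the sum over all rows is `tr (adj Mᵀ · A · Mᵀ) = tr (Mᵀ · adj Mᵀ · A) =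
tr A · det M`. For `M = (e₁, …, e_{n-1}, w)` the first `n - 1` terms are `⟨v' i, w⟩` and the last
one is `⟨v, A w⟩ = ⟨Aᵀ v, w⟩`; since `w` is arbitrary, the identity follows.
-/

open Matrix

namespace Matrix

variable {R : Type*}

section Cramer

variable {n : Type*} [Fintype n] [DecidableEq n] [CommRing R]

theorem det_updateRow_mulVec_self (A M : Matrix n n R) (j : n) :
    (M.updateRow j (A *ᵥ M j)).det = (Mᵀ.adjugate * A * Mᵀ) j j := by
  rw [← det_transpose, ← updateCol_transpose, ← cramer_apply, cramer_eq_adjugate_mulVec,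
    mulVec_mulVec]
  simp [mul_apply, mulVec, dotProduct]

theorem sum_det_updateRow_mulVec_self (A M : Matrix n n R) :
    ∑ j, (M.updateRow j (A *ᵥ M j)).det = A.trace * M.det :=
  calc ∑ j, (M.updateRow j (A *ᵥ M j)).det
      = (Mᵀ.adjugate * A * Mᵀ).trace := by simp only [det_updateRow_mulVec_self, trace, diag]
    _ = (Mᵀ * Mᵀ.adjugate * A).trace := by rw [trace_mul_comm, Matrix.mul_assoc]
    _ = A.trace * M.det := by
      rw [mul_adjugate, det_transpose, smul_mul, Matrix.one_mul, trace_smul, smul_eq_mul,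
        mul_comm]

end Cramer

section Snoc

variable {m : ℕ} (e : Fin m → Fin (m + 1) → R) (w x : Fin (m + 1) → R)

theorem updateRow_of_snoc_castSucc (i : Fin m) :
    (of (Fin.snoc e w)).updateRow i.castSucc x = of (Fin.snoc (Function.update e i x) w) := by
  rw [updateRow, Fin.snoc_update]
  rfl

theorem updateRow_of_snoc_last :
    (of (Fin.snoc e w)).updateRow (Fin.last m) x = of (Fin.snoc e x) := by
  change of (Function.update (Fin.snoc e w) _ x) = _
  rw [Fin.update_snoc_last]

theorem sum_det_snoc_update_mulVec_add [CommRing R] (A : Matrix (Fin (m + 1)) (Fin (m + 1)) R) :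
    ∑ i, (of (Fin.snoc (Function.update e i (A *ᵥ e i)) w)).det + (of (Fin.snoc e (A *ᵥ w))).det
      = A.trace * (of (Fin.snoc e w)).det := by
  have row_eq : ∀ i, of (Fin.snoc e w) i = Fin.snoc (α := fun _ ↦ Fin (m + 1) → R) e w i :=
    fun _ => rfl
  rw [← sum_det_updateRow_mulVec_self, Fin.sum_univ_castSucc]
  simp only [row_eq, Fin.snoc_castSucc, Fin.snoc_last, updateRow_of_snoc_castSucc,
    updateRow_of_snoc_last]

end Snoc

end Matrix

theorem stmt2_general (m : ℕ) (A : Matrix (Fin (m + 1)) (Fin (m + 1)) ℝ)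
    (e : Fin m → (Fin (m + 1) → ℝ)) (v : Fin (m + 1) → ℝ)
    (hv : ∀ w : Fin (m + 1) → ℝ, v ⬝ᵥ w = (Matrix.of (Fin.snoc e w)).det)
    (v' : Fin m → (Fin (m + 1) → ℝ))
    (hv' : ∀ (i : Fin m) (w : Fin (m + 1) → ℝ),
      v' i ⬝ᵥ w = (Matrix.of (Fin.snoc (Function.update e i (A.mulVec (e i))) w)).det) :
    (∑ i, v' i) = A.trace • v - A.transpose.mulVec v := by
  refine dotProduct_eq _ _ fun w => ?_
  have key := sum_det_snoc_update_mulVec_add e w A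
  simp only [← hv, ← hv'] at key
  rw [sum_dotProduct, sub_dotProduct, smul_dotProduct, smul_eq_mul, mulVec_transpose,
    ← dotProduct_mulVec]
  linarith

/-- Generalized cross product identity in `ℝⁿ` (`n = m+1 ≥ 2`): if `v` is the
generalized cross product of `e₁, …, e_{n-1}` (characterized by `⟨v, w⟩ = det(e₁,…,e_{n-1},w)`)
and `v' i` is the generalized cross product with `eᵢ` replaced by `A eᵢ`, then
`∑ i, v' i = (tr A) v − Aᵀ v`. -/
theorem stmt2 (m : ℕ) (hm : 1 ≤ m) (A : Matrix (Fin (m + 1)) (Fin (m + 1)) ℝ)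
    (e : Fin m → (Fin (m + 1) → ℝ)) (v : Fin (m + 1) → ℝ)
    (hv : ∀ w : Fin (m + 1) → ℝ, v ⬝ᵥ w = (Matrix.of (Fin.snoc e w)).det)
    (v' : Fin m → (Fin (m + 1) → ℝ))
    (hv' : ∀ (i : Fin m) (w : Fin (m + 1) → ℝ),
      v' i ⬝ᵥ w = (Matrix.of (Fin.snoc (Function.update e i (A.mulVec (e i))) w)).det) :
    (∑ i, v' i) = A.trace • v - A.transpose.mulVec v :=
  stmt2_general m A e v hv v' hv'
end

section
/- Let Γ be a smooth compact hypersurface in ℝ³ with outward unit normal n, and let ξ ∈ C_b^∞(ℝ³,ℝ³). Define for small t the deformed surface Γ_t = (Id + tξ)(Γ) and the surface Jacobian J_t(x) = ‖cof(I + t Dξ(x)) n(x)‖ (norm of the cofactor matrix applied to the normal). Then t ↦ J_t(x) is differentiable at t = 0 and d/dt|_{t=0} J_t(x) = div_Γ ξ(x), the surface divergence of ξ at x. -/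
open Matrix

private lemma quartic_deriv (c0 c1 c2 c3 c4 : ℝ) :
    HasDerivAt (fun t : ℝ => c0 + c1 * t + c2 * t ^ 2 + c3 * t ^ 3 + c4 * t ^ 4) c1 0 := by
  have h1 : HasDerivAt (fun t : ℝ => t) 1 0 := hasDerivAt_id 0
  have h := ((((hasDerivAt_const (0:ℝ) c0).add (h1.const_mul c1)).add
      ((h1.pow 2).const_mul c2)).add ((h1.pow 3).const_mul c3)).add
      ((h1.pow 4).const_mul c4)
  refine (h.congr_deriv ?_).congr_of_eventuallyEq (Filter.Eventually.of_forall fun t => ?_)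
  all_goals norm_num

set_option maxHeartbeats 2000000 in
/-- Pointwise on the surface: with `M = Dξ(x)` the Jacobian matrix of the
deformation field `ξ` at `x ∈ Γ` and `ν = n(x)` the unit normal, the surface Jacobian
`J_t = ‖cof(I + tM) ν‖` (with `cof A = adjugate(A)ᵀ`) is differentiable at `t = 0` with
derivative `div_Γ ξ(x) = tr M − ⟨M ν, ν⟩`. -/
theorem stmt5 (ξ : (Fin 3 → ℝ) → (Fin 3 → ℝ)) (x : Fin 3 → ℝ)
    (hξ : ContDiff ℝ (⊤ : ℕ∞) ξ)
    (M : Matrix (Fin 3) (Fin 3) ℝ)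
    (hM : ∀ i j, M i j = fderiv ℝ ξ x (Pi.single j 1) i)
    (ν : Fin 3 → ℝ) (hν : ∑ i, ν i ^ 2 = 1) :
    HasDerivAt
      (fun t : ℝ =>
        Real.sqrt (∑ i, ((Matrix.adjugate (1 + t • M)).transpose.mulVec ν i) ^ 2))
      (M.trace - M.mulVec ν ⬝ᵥ ν) 0 := by
  rw [Fin.sum_univ_three] at hν
  have hfeq : (fun t : ℝ => ∑ i, ((Matrix.adjugate (1 + t • M)).transpose.mulVec ν i) ^ 2)
      = fun t : ℝ => (ν 2 ^ 2 + ν 1 ^ 2 + ν 0 ^ 2) + (2 * M 2 2 * ν 1 ^ 2 + 2 * M 2 2 * ν 0 ^ 2 - 2 * M 2 1 * ν 1 * ν 2 - 2 * M 2 0 * ν 0 * ν 2 - 2 * M 1 2 * ν 1 * ν 2 + 2 * M 1 1 * ν 2 ^ 2 + 2 * M 1 1 * ν 0 ^ 2 - 2 * M 1 0 * ν 0 * ν 1 - 2 * M 0 2 * ν 0 * ν 2 - 2 * M 0 1 * ν 0 * ν 1 + 2 * M 0 0 * ν 2 ^ 2 + 2 * M 0 0 * ν 1 ^ 2) * t +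 (M 2 2 ^ 2 * ν 1 ^ 2 + M 2 2 ^ 2 * ν 0 ^ 2 - 2 * M 2 1 * M 2 2 * ν 1 * ν 2 + M 2 1 ^ 2 * ν 2 ^ 2 - 2 * M 2 0 * M 2 2 * ν 0 * ν 2 + M 2 0 ^ 2 * ν 2 ^ 2 - 2 * M 1 2 * M 2 1 * ν 0 ^ 2 + 2 * M 1 2 * M 2 0 * ν 0 * ν 1 + M 1 2 ^ 2 * ν 1 ^ 2 + 4 * M 1 1 * M 2 2 * ν 0 ^ 2 - 4 * M 1 1 * M 2 0 * ν 0 * ν 2 - 2 * M 1 1 * M 1 2 * ν 1 * ν 2 + M 1 1 ^ 2 * ν 2 ^ 2 + M 1 1 ^ 2 * ν 0 ^ 2 - 4 * M 1 0 * M 2 2 * ν 0 * ν 1 + 2 * M 1 0 * M 2 1 * ν 0 * ν 2 + 2 * M 1 0 * M 2 0 * ν 1 * ν 2 - 2 * M 1 0 * M 1 1 * ν 0 * ν 1 + M 1 0 ^ 2 * ν 1 ^ 2 + 2 * M 0 2 * M 2 1 * ν 0 * ν 1 - 2 * M 0 2 * M 2 0 * ν 1 ^ 2 + 2 * M 0 2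 * M 1 2 * ν 0 * ν 1 - 4 * M 0 2 * M 1 1 * ν 0 * ν 2 + 2 * M 0 2 * M 1 0 * ν 1 * ν 2 + M 0 2 ^ 2 * ν 0 ^ 2 - 4 * M 0 1 * M 2 2 * ν 0 * ν 1 + 2 * M 0 1 * M 2 1 * ν 0 * ν 2 + 2 * M 0 1 * M 2 0 * ν 1 * ν 2 + 2 * M 0 1 * M 1 2 * ν 0 * ν 2 - 2 * M 0 1 * M 1 0 * ν 2 ^ 2 + M 0 1 ^ 2 * ν 0 ^ 2 + 4 * M 0 0 * M 2 2 * ν 1 ^ 2 - 4 * M 0 0 * M 2 1 * ν 1 * ν 2 - 4 * M 0 0 * M 1 2 * ν 1 * ν 2 + 4 * M 0 0 * M 1 1 * ν 2 ^ 2 - 2 * M 0 0 * M 0 2 * ν 0 * ν 2 - 2 * M 0 0 * M 0 1 * ν 0 * ν 1 + M 0 0 ^ 2 * ν 2 ^ 2 + M 0 0 ^ 2 * ν 1 ^ 2) * t ^ 2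
        + (-2 * M 1 2 * M 2 1 * M 2 2 * ν 0 ^ 2 + 2 * M 1 2 * M 2 0 * M 2 2 * ν 0 * ν 1 + 2 * M 1 2 * M 2 0 * M 2 1 * ν 0 * ν 2 - 2 * M 1 2 * M 2 0 ^ 2 * ν 1 * ν 2 + 2 * M 1 1 * M 2 2 ^ 2 * ν 0 ^ 2 - 4 * M 1 1 * M 2 0 * M 2 2 * ν 0 * ν 2 + 2 * M 1 1 * M 2 0 ^ 2 * ν 2 ^ 2 - 2 * M 1 1 * M 1 2 * M 2 1 * ν 0 ^ 2 + 2 * M 1 1 * M 1 2 * M 2 0 * ν 0 * ν 1 + 2 * M 1 1 ^ 2 * M 2 2 * ν 0 ^ 2 - 2 * M 1 1 ^ 2 * M 2 0 * ν 0 * ν 2 - 2 * M 1 0 * M 2 2 ^ 2 * ν 0 * ν 1 + 2 * M 1 0 * M 2 1 * M 2 2 * ν 0 * ν 2 + 2 * M 1 0 * M 2 0 * M 2 2 * ν 1 * ν 2 - 2 * M 1 0 * M 2 0 * M 2 1 * ν 2 ^ 2 + 2 * M 1 0 * M 1 2 * M 2 1 * ν 0 * ν 1 - 2 * M 1 0 *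 M 1 2 * M 2 0 * ν 1 ^ 2 - 4 * M 1 0 * M 1 1 * M 2 2 * ν 0 * ν 1 + 2 * M 1 0 * M 1 1 * M 2 1 * ν 0 * ν 2 + 2 * M 1 0 * M 1 1 * M 2 0 * ν 1 * ν 2 + 2 * M 1 0 ^ 2 * M 2 2 * ν 1 ^ 2 - 2 * M 1 0 ^ 2 * M 2 1 * ν 1 * ν 2 + 2 * M 0 2 * M 2 1 * M 2 2 * ν 0 * ν 1 - 2 * M 0 2 * M 2 1 ^ 2 * ν 0 * ν 2 - 2 * M 0 2 * M 2 0 * M 2 2 * ν 1 ^ 2 + 2 * M 0 2 * M 2 0 * M 2 1 * ν 1 * ν 2 + 2 * M 0 2 * M 1 1 * M 1 2 * ν 0 * ν 1 - 2 * M 0 2 * M 1 1 ^ 2 * ν 0 * ν 2 - 2 * M 0 2 * M 1 0 * M 1 2 * ν 1 ^ 2 + 2 * M 0 2 * M 1 0 * M 1 1 * ν 1 * ν 2 + 2 * M 0 2 ^ 2 * M 1 1 * ν 0 ^ 2 - 2 * M 0 2 ^ 2 * M 1 0 * ν 0 * ν 1 - 2 * M 0 1 * M 2 2 ^ 2 *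 ν 0 * ν 1 + 2 * M 0 1 * M 2 1 * M 2 2 * ν 0 * ν 2 + 2 * M 0 1 * M 2 0 * M 2 2 * ν 1 * ν 2 - 2 * M 0 1 * M 2 0 * M 2 1 * ν 2 ^ 2 - 2 * M 0 1 * M 1 2 ^ 2 * ν 0 * ν 1 + 2 * M 0 1 * M 1 1 * M 1 2 * ν 0 * ν 2 + 2 * M 0 1 * M 1 0 * M 1 2 * ν 1 * ν 2 - 2 * M 0 1 * M 1 0 * M 1 1 * ν 2 ^ 2 - 2 * M 0 1 * M 0 2 * M 2 1 * ν 0 ^ 2 + 2 * M 0 1 * M 0 2 * M 2 0 * ν 0 * ν 1 - 2 * M 0 1 * M 0 2 * M 1 2 * ν 0 ^ 2 + 2 * M 0 1 * M 0 2 * M 1 0 * ν 0 * ν 2 + 2 * M 0 1 ^ 2 * M 2 2 * ν 0 ^ 2 - 2 * M 0 1 ^ 2 * M 2 0 * ν 0 * ν 2 + 2 * M 0 0 * M 2 2 ^ 2 * ν 1 ^ 2 - 4 * M 0 0 * M 2 1 * M 2 2 * ν 1 * ν 2 + 2 * M 0 0 * M 2 1 ^ 2 * ν 2 ^ 2 +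 2 * M 0 0 * M 1 2 ^ 2 * ν 1 ^ 2 - 4 * M 0 0 * M 1 1 * M 1 2 * ν 1 * ν 2 + 2 * M 0 0 * M 1 1 ^ 2 * ν 2 ^ 2 + 2 * M 0 0 * M 0 2 * M 2 1 * ν 0 * ν 1 - 2 * M 0 0 * M 0 2 * M 2 0 * ν 1 ^ 2 + 2 * M 0 0 * M 0 2 * M 1 2 * ν 0 * ν 1 - 4 * M 0 0 * M 0 2 * M 1 1 * ν 0 * ν 2 + 2 * M 0 0 * M 0 2 * M 1 0 * ν 1 * ν 2 - 4 * M 0 0 * M 0 1 * M 2 2 * ν 0 * ν 1 + 2 * M 0 0 * M 0 1 * M 2 1 * ν 0 * ν 2 + 2 * M 0 0 * M 0 1 * M 2 0 * ν 1 * ν 2 + 2 * M 0 0 * M 0 1 * M 1 2 * ν 0 * ν 2 - 2 * M 0 0 * M 0 1 * M 1 0 * ν 2 ^ 2 + 2 * M 0 0 ^ 2 * M 2 2 * ν 1 ^ 2 - 2 * M 0 0 ^ 2 * M 2 1 * ν 1 * ν 2 - 2 * M 0 0 ^ 2 * M 1 2 * ν 1 * ν 2 + 2 * M 0 0 ^ 2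 * M 1 1 * ν 2 ^ 2) * t ^ 3 + (M 1 2 ^ 2 * M 2 1 ^ 2 * ν 0 ^ 2 - 2 * M 1 2 ^ 2 * M 2 0 * M 2 1 * ν 0 * ν 1 + M 1 2 ^ 2 * M 2 0 ^ 2 * ν 1 ^ 2 - 2 * M 1 1 * M 1 2 * M 2 1 * M 2 2 * ν 0 ^ 2 + 2 * M 1 1 * M 1 2 * M 2 0 * M 2 2 * ν 0 * ν 1 + 2 * M 1 1 * M 1 2 * M 2 0 * M 2 1 * ν 0 * ν 2 - 2 * M 1 1 * M 1 2 * M 2 0 ^ 2 * ν 1 * ν 2 + M 1 1 ^ 2 * M 2 2 ^ 2 * ν 0 ^ 2 - 2 * M 1 1 ^ 2 * M 2 0 * M 2 2 * ν 0 * ν 2 + M 1 1 ^ 2 * M 2 0 ^ 2 * ν 2 ^ 2 + 2 * M 1 0 * M 1 2 * M 2 1 * M 2 2 * ν 0 * ν 1 - 2 * M 1 0 * M 1 2 * M 2 1 ^ 2 * ν 0 * ν 2 - 2 * M 1 0 * M 1 2 * M 2 0 * M 2 2 * ν 1 ^ 2 + 2 * M 1 0 * M 1 2 * M 2 0 * M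 2 1 * ν 1 * ν 2 - 2 * M 1 0 * M 1 1 * M 2 2 ^ 2 * ν 0 * ν 1 + 2 * M 1 0 * M 1 1 * M 2 1 * M 2 2 * ν 0 * ν 2 + 2 * M 1 0 * M 1 1 * M 2 0 * M 2 2 * ν 1 * ν 2 - 2 * M 1 0 * M 1 1 * M 2 0 * M 2 1 * ν 2 ^ 2 + M 1 0 ^ 2 * M 2 2 ^ 2 * ν 1 ^ 2 - 2 * M 1 0 ^ 2 * M 2 1 * M 2 2 * ν 1 * ν 2 + M 1 0 ^ 2 * M 2 1 ^ 2 * ν 2 ^ 2 + M 0 2 ^ 2 * M 2 1 ^ 2 * ν 0 ^ 2 - 2 * M 0 2 ^ 2 * M 2 0 * M 2 1 * ν 0 * ν 1 + M 0 2 ^ 2 * M 2 0 ^ 2 * ν 1 ^ 2 + M 0 2 ^ 2 * M 1 1 ^ 2 * ν 0 ^ 2 - 2 * M 0 2 ^ 2 * M 1 0 * M 1 1 * ν 0 * ν 1 + M 0 2 ^ 2 * M 1 0 ^ 2 * ν 1 ^ 2 - 2 * M 0 1 * M 0 2 * M 2 1 * M 2 2 * ν 0 ^ 2 + 2 * M 0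 1 * M 0 2 * M 2 0 * M 2 2 * ν 0 * ν 1 + 2 * M 0 1 * M 0 2 * M 2 0 * M 2 1 * ν 0 * ν 2 - 2 * M 0 1 * M 0 2 * M 2 0 ^ 2 * ν 1 * ν 2 - 2 * M 0 1 * M 0 2 * M 1 1 * M 1 2 * ν 0 ^ 2 + 2 * M 0 1 * M 0 2 * M 1 0 * M 1 2 * ν 0 * ν 1 + 2 * M 0 1 * M 0 2 * M 1 0 * M 1 1 * ν 0 * ν 2 - 2 * M 0 1 * M 0 2 * M 1 0 ^ 2 * ν 1 * ν 2 + M 0 1 ^ 2 * M 2 2 ^ 2 * ν 0 ^ 2 - 2 * M 0 1 ^ 2 * M 2 0 * M 2 2 * ν 0 * ν 2 + M 0 1 ^ 2 * M 2 0 ^ 2 * ν 2 ^ 2 + M 0 1 ^ 2 * M 1 2 ^ 2 * ν 0 ^ 2 - 2 * M 0 1 ^ 2 * M 1 0 * M 1 2 * ν 0 * ν 2 + M 0 1 ^ 2 * M 1 0 ^ 2 * ν 2 ^ 2 + 2 * M 0 0 * M 0 2 * M 2 1 * M 2 2 * ν 0 * ν 1 - 2 * M 0 0 * M 0 2 * M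 2 1 ^ 2 * ν 0 * ν 2 - 2 * M 0 0 * M 0 2 * M 2 0 * M 2 2 * ν 1 ^ 2 + 2 * M 0 0 * M 0 2 * M 2 0 * M 2 1 * ν 1 * ν 2 + 2 * M 0 0 * M 0 2 * M 1 1 * M 1 2 * ν 0 * ν 1 - 2 * M 0 0 * M 0 2 * M 1 1 ^ 2 * ν 0 * ν 2 - 2 * M 0 0 * M 0 2 * M 1 0 * M 1 2 * ν 1 ^ 2 + 2 * M 0 0 * M 0 2 * M 1 0 * M 1 1 * ν 1 * ν 2 - 2 * M 0 0 * M 0 1 * M 2 2 ^ 2 * ν 0 * ν 1 + 2 * M 0 0 * M 0 1 * M 2 1 * M 2 2 * ν 0 * ν 2 + 2 * M 0 0 * M 0 1 * M 2 0 * M 2 2 * ν 1 * ν 2 - 2 * M 0 0 * M 0 1 * M 2 0 * M 2 1 * ν 2 ^ 2 - 2 * M 0 0 * M 0 1 * M 1 2 ^ 2 * ν 0 * ν 1 + 2 * M 0 0 * M 0 1 * M 1 1 * M 1 2 * ν 0 * ν 2 + 2 * M 0 0 * M 0 1 * M 1 0 * M 1 2 * ν 1 * ν 2 - 2 * M 0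 0 * M 0 1 * M 1 0 * M 1 1 * ν 2 ^ 2 + M 0 0 ^ 2 * M 2 2 ^ 2 * ν 1 ^ 2 - 2 * M 0 0 ^ 2 * M 2 1 * M 2 2 * ν 1 * ν 2 + M 0 0 ^ 2 * M 2 1 ^ 2 * ν 2 ^ 2 + M 0 0 ^ 2 * M 1 2 ^ 2 * ν 1 ^ 2 - 2 * M 0 0 ^ 2 * M 1 1 * M 1 2 * ν 1 * ν 2 + M 0 0 ^ 2 * M 1 1 ^ 2 * ν 2 ^ 2) * t ^ 4 := by
    funext t
    simp only [Matrix.adjugate_fin_three, Matrix.mulVec, dotProduct,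
      Fin.sum_univ_three, Matrix.transpose_apply, Matrix.add_apply, Matrix.smul_apply,
      Matrix.one_apply, Matrix.cons_val', Matrix.cons_val_zero, Matrix.cons_val_one,
      Matrix.head_cons, Matrix.empty_val', Matrix.cons_val_fin_one, Matrix.head_fin_const,
      smul_eq_mul, Fin.isValue]
    norm_num [Fin.ext_iff, Matrix.cons_val_two, Matrix.vecHead, Matrix.vecTail]
    ring
  have hf : HasDerivAt (fun t : ℝ => ∑ i, ((Matrix.adjugate (1 + t • M)).transpose.mulVec ν i) ^ 2)
      (2 * M 2 2 * ν 1 ^ 2 + 2 * M 2 2 * ν 0 ^ 2 - 2 * M 2 1 * ν 1 * ν 2 - 2 * M 2 0 * ν 0 * ν 2 - 2 * M 1 2 * ν 1 * ν 2 + 2 * M 1 1 * ν 2 ^ 2 + 2 * M 1 1 * ν 0 ^ 2 - 2 * M 1 0 * ν 0 * ν 1 - 2 * M 0 2 * ν 0 * ν 2 - 2 * M 0 1 * ν 0 * ν 1 + 2 * M 0 0 * ν 2 ^ 2 + 2 * M 0 0 * ν 1 ^ 2) 0 := by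
    rw [hfeq]; exact quartic_deriv _ _ _ _ _
  have h0 : (∑ i, ((Matrix.adjugate (1 + (0:ℝ) • M)).transpose.mulVec ν i) ^ 2) = 1 := by
    simp [Matrix.adjugate_one, Matrix.one_mulVec, Fin.sum_univ_three, hν]
  have hne : (∑ i, ((Matrix.adjugate (1 + (0:ℝ) • M)).transpose.mulVec ν i) ^ 2) ≠ 0 := by
    rw [h0]; norm_num
  have h := hf.sqrt hne
  rw [h0, Real.sqrt_one] at h
  convert h using 1
  simp only [Matrix.trace, Matrix.diag, Matrix.mulVec, dotProduct, Fin.sum_univ_three]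
  field_simp
  linear_combination (-(M 0 0 + M 1 1 + M 2 2)) * hν
end

section
/- Let Γ be a smooth compact hypersurface in ℝ³ with outward unit normal n, ξ ∈ C_b^∞(ℝ³,ℝ³), and let n_t denote the outward unit normal to Γ_t = (Id + tξ)(Γ), pulled back to Γ via x ↦ x + tξ(x). Then t ↦ n_t∘(Id+tξ) is differentiable at t = 0 and d/dt|_{t=0} (n_t∘(Id+tξ)) = −[∇_Γ ξ] n, where [∇_Γ ξ] is the matrix whose i-th column is the tangential gradient of the i-th component of ξ. -/
open Matrix

/-- Pointwise on the surface: with `M = Dξ(x)` and unit normal `ν = n(x)`,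
the pulled-back unit normal `N(t) = ω_t / ‖ω_t‖`, `ω_t = cof(I + tM) ν = adjugate(I+tM)ᵀ ν`,
is differentiable at `t = 0` with derivative `−[∇_Γ ξ] n = −(Mᵀν − ⟨Mᵀν, ν⟩ ν)`
(the tangential part of `−Mᵀν`). -/
theorem stmt6 (ξ : (Fin 3 → ℝ) → (Fin 3 → ℝ)) (x : Fin 3 → ℝ)
    (hξ : ContDiff ℝ (⊤ : ℕ∞) ξ)
    (M : Matrix (Fin 3) (Fin 3) ℝ)
    (hM : ∀ i j, M i j = fderiv ℝ ξ x (Pi.single j 1) i)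
    (ν : Fin 3 → ℝ) (hν : ∑ i, ν i ^ 2 = 1) :
    HasDerivAt
      (fun t : ℝ =>
        (Real.sqrt (∑ i, ((Matrix.adjugate (1 + t • M)).transpose.mulVec ν i) ^ 2))⁻¹ •
          (Matrix.adjugate (1 + t • M)).transpose.mulVec ν)
      (-(M.transpose.mulVec ν - (M.transpose.mulVec ν ⬝ᵥ ν) • ν)) 0 := by
  set b : Fin 3 → ℝ := fun i => M.trace * ν i - M.transpose.mulVec ν i with hb
  set c : Fin 3 → ℝ := (Matrix.adjugate M).transpose.mulVec ν with hc
  have key : ∀ (t : ℝ) (i : Fin 3),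
      (Matrix.adjugate (1 + t • M)).transpose.mulVec ν i
        = ν i + b i * t + c i * t ^ 2 := by
    intro t i
    fin_cases i <;>
      simp [hb, hc, Matrix.adjugate_fin_three, Matrix.mulVec, dotProduct,
        Matrix.transpose_apply, Matrix.add_apply, Matrix.smul_apply, Matrix.one_apply,
        Fin.sum_univ_three, Matrix.trace_fin_three, Matrix.vecHead, Matrix.vecTail,
        Matrix.cons_val_zero, Matrix.cons_val_one, Function.comp] <;> ring
  have hω0 : ∀ i, (Matrix.adjugate (1 + (0:ℝ) • M)).transpose.mulVec ν i = ν i := by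
    intro i; rw [key]; ring
  have h1 : ∀ i, HasDerivAt
      (fun t : ℝ => (Matrix.adjugate (1 + t • M)).transpose.mulVec ν i) (b i) 0 := by
    intro i
    have h : HasDerivAt (fun t : ℝ => ν i + b i * t + c i * t ^ 2) (b i) 0 := by
      have := ((hasDerivAt_const (0:ℝ) (ν i)).fun_add
        ((hasDerivAt_id (0:ℝ)).const_mul (b i))).fun_add
        ((hasDerivAt_pow 2 (0:ℝ)).const_mul (c i))
      simpa using this
    have heq : (fun t : ℝ => (Matrix.adjugate (1 + t • M)).transpose.mulVec ν i)
        = fun t : ℝ => ν i + b i * t + c i * t ^ 2 := funext fun t => key t i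
    rw [heq]; exact h
  -- derivative of the squared norm
  have h2 : HasDerivAt
      (fun t : ℝ => ∑ i, ((Matrix.adjugate (1 + t • M)).transpose.mulVec ν i) ^ 2)
      (∑ i, 2 * ν i * b i) 0 := by
    apply HasDerivAt.fun_sum
    intro i _
    have := (h1 i).fun_pow 2
    simpa [hω0 i] using this
  have hS0 : (∑ i, ((Matrix.adjugate (1 + (0:ℝ) • M)).transpose.mulVec ν i) ^ 2) = 1 := by
    simp only [hω0]; exact hν
  -- derivative of sqrt of squared norm
  have h3 : HasDerivAt
      (fun t : ℝ => Real.sqrt (∑ i, ((Matrix.adjugate (1 + t • M)).transpose.mulVec ν i) ^ 2))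
      ((∑ i, 2 * ν i * b i) / 2) 0 := by
    have := h2.sqrt (by rw [hS0]; norm_num)
    simpa [hS0, hν] using this
  -- derivative of the inverse of the norm
  have h4 : HasDerivAt
      (fun t : ℝ =>
        (Real.sqrt (∑ i, ((Matrix.adjugate (1 + t • M)).transpose.mulVec ν i) ^ 2))⁻¹)
      (-((∑ i, 2 * ν i * b i) / 2)) 0 := by
    have := h3.fun_inv (by rw [hS0]; norm_num)
    simpa [hS0, hν] using this
  -- derivative of the vector function
  have h5 : HasDerivAt
      (fun t : ℝ => (Matrix.adjugate (1 + t • M)).transpose.mulVec ν) b 0 :=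
    hasDerivAt_pi.2 h1
  have h6 := h4.fun_smul h5
  have hval : (fun i => (Matrix.adjugate (1 + (0:ℝ) • M)).transpose.mulVec ν i) = ν :=
    funext hω0
  have hsqrt1 : Real.sqrt (∑ i, ((Matrix.adjugate (1 + (0:ℝ) • M)).transpose.mulVec ν i) ^ 2)
      = 1 := by rw [hS0, Real.sqrt_one]
  convert h6 using 1
  case e'_4 => rfl
  case e'_5 => rfl
  case e'_6 => rfl
  have hbv : ∑ i, 2 * ν i * b i = 2 * (M.trace - M.transpose.mulVec ν ⬝ᵥ ν) := by
    simp only [hb, dotProduct]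
    rw [Fin.sum_univ_three] at hν ⊢
    rw [Fin.sum_univ_three]
    linear_combination (2 * M.trace) * hν
  funext i
  simp only [hsqrt1, hbv, inv_one, Pi.smul_apply, Pi.add_apply, Pi.neg_apply, Pi.sub_apply,
    smul_eq_mul]
  have : (Matrix.adjugate (1 + (0:ℝ) • M)).transpose.mulVec ν i = ν i := hω0 i
  rw [this, hb]
  ring
end

section
/- With the notation of the previous deformation setup, the second derivative at t=0 of the pulled-back surface Jacobian in two directions ξ₁, ξ₂ (via the polarization of t ↦ J_{t(ξ₁+ξ₂)}) equals ∂²J[0; ξ₁,ξ₂] = −tr([∇_Γ ξ₂][∇_Γ ξ₁]) + (div_Γ ξ₁)(div_Γ ξ₂) + ([∇_Γ ξ₁]n · [∇_Γ ξ₂]n). -/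
/-!
Since the adjugate is quadratic in dimension 3, `adj(1 + tM)ᵀ ν = ν + t a + t² b` with
`a = (tr M) ν - Mᵀ ν` and `b = adj(M)ᵀ ν`. For a quadratic curve through a unit vector the
second derivative of the length at `0` is `|a|² + 2⟨ν, b⟩ - ⟨ν, a⟩²`, and for `|ν| = 1` this
quadratic form in `M` is the diagonal of the symmetric bilinear form
`β(G₁, G₂) = -tr(G₂ G₁) + tr G₁ tr G₂ + ⟨G₁ ν, G₂ ν⟩` evaluated at `G = (I - ννᵀ) Mᵀ`.
As `G` is linear in `M`, polarization gives the claim.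
-/

open Filter Topology Matrix

theorem iteratedDeriv_two_sqrt_of_eq_one {p p' : ℝ → ℝ} {p'' : ℝ}
    (hp : ∀ᶠ t in 𝓝 0, HasDerivAt p (p' t) t) (hp' : HasDerivAt p' p'' 0) (hp0 : p 0 = 1) :
    iteratedDeriv 2 (fun t => √(p t)) 0 = p'' / 2 - p' 0 ^ 2 / 4 := by
  have hpos : ∀ᶠ t in 𝓝 0, 0 < p t :=
    hp.self_of_nhds.continuousAt.eventually (lt_mem_nhds (by rw [hp0]; norm_num))
  have hderiv : deriv (fun t => √(p t)) =ᶠ[𝓝 0] fun t => p' t / (2 * √(p t)) :=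
    (hp.and hpos).mono fun t ⟨hd, hpt⟩ => (hd.sqrt hpt.ne').deriv
  have hdenom : HasDerivAt (fun t => 2 * √(p t)) (2 * (p' 0 / (2 * √(p 0)))) 0 :=
    (hp.self_of_nhds.sqrt (by simp [hp0])).const_mul 2
  rw [iteratedDeriv_succ, iteratedDeriv_one, hderiv.deriv_eq,
    (hp'.fun_div hdenom (by simp [hp0])).deriv]
  simp only [hp0, Real.sqrt_one]
  ring

theorem iteratedDeriv_two_sqrt_sum_sq_quadratic {ι : Type*} [Fintype ι] (ν a b : ι → ℝ)
    (hν : ν ⬝ᵥ ν = 1) :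
    iteratedDeriv 2 (fun t : ℝ => √(∑ i, (ν i + t * a i + t ^ 2 * b i) ^ 2)) 0
      = a ⬝ᵥ a + 2 * (ν ⬝ᵥ b) - (ν ⬝ᵥ a) ^ 2 := by
  have hvel (i : ι) (t : ℝ) : HasDerivAt (fun t => a i + 2 * t * b i) (2 * b i) t := by
    simpa using (((hasDerivAt_id t).const_mul 2).mul_const (b i)).const_add (a i)
  have hcurve (i : ι) (t : ℝ) :
      HasDerivAt (fun t => ν i + t * a i + t ^ 2 * b i) (a i + 2 * t * b i) t := by
    have h1 : HasDerivAt (fun t : ℝ => t * a i) (a i) t := by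
      simpa using (hasDerivAt_id t).mul_const (a i)
    have h2 : HasDerivAt (fun t : ℝ => t ^ 2 * b i) (2 * t * b i) t := by
      simpa using (hasDerivAt_pow 2 t).mul_const (b i)
    simpa using (h1.const_add (ν i)).fun_add h2
  have hp (t : ℝ) : HasDerivAt (fun t => ∑ i, (ν i + t * a i + t ^ 2 * b i) ^ 2)
      (∑ i, 2 * ((ν i + t * a i + t ^ 2 * b i) * (a i + 2 * t * b i))) t :=
    (HasDerivAt.fun_sum fun i _ => (hcurve i t).fun_pow 2).congr_deriv
      (Finset.sum_congr rfl fun i _ => by ring)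
  have hp' : HasDerivAt (fun t => ∑ i, 2 * ((ν i + t * a i + t ^ 2 * b i) * (a i + 2 * t * b i)))
      (2 * (a ⬝ᵥ a + 2 * (ν ⬝ᵥ b))) 0 :=
    (HasDerivAt.fun_sum fun i _ => ((hcurve i 0).fun_mul (hvel i 0)).const_mul 2).congr_deriv
      (by
        simp only [dotProduct, mul_add, Finset.mul_sum, ← Finset.sum_add_distrib]
        exact Finset.sum_congr rfl fun i _ => by ring)
  refine (iteratedDeriv_two_sqrt_of_eq_one (Eventually.of_forall hp) hp' ?_).trans ?_
  · simpa [dotProduct, sq] using hν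
  · simp only [dotProduct, zero_mul, mul_zero, zero_pow two_ne_zero,
      add_zero, ← Finset.mul_sum]
    ring

theorem adjugate_one_add_smul_fin_three (M : Matrix (Fin 3) (Fin 3) ℝ) (t : ℝ) :
    adjugate (1 + t • M) = 1 + t • (trace M • 1 - M) + t ^ 2 • adjugate M := by
  ext i j
  fin_cases i <;> fin_cases j <;>
    simp [adjugate_fin_three, trace_fin_three, one_apply] <;> ring

def tangentialGradient {n : Type*} [Fintype n] [DecidableEq n] (ν : n → ℝ)
    (M : Matrix n n ℝ) : Matrix n n ℝ :=
  (1 - vecMulVec ν ν) * Mᵀ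

def jacobianSecondVariation {n : Type*} [Fintype n] (ν : n → ℝ) (G₁ G₂ : Matrix n n ℝ) : ℝ :=
  -trace (G₂ * G₁) + trace G₁ * trace G₂ + G₁ *ᵥ ν ⬝ᵥ G₂ *ᵥ ν

theorem tangentialGradient_add {n : Type*} [Fintype n] [DecidableEq n] (ν : n → ℝ)
    (M₁ M₂ : Matrix n n ℝ) :
    tangentialGradient ν (M₁ + M₂) = tangentialGradient ν M₁ + tangentialGradient ν M₂ := by
  simp [tangentialGradient, mul_add]

theorem jacobianSecondVariation_polarization {n : Type*} [Fintype n] (ν : n → ℝ)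
    (G₁ G₂ : Matrix n n ℝ) :
    (1 / 2 : ℝ) * (jacobianSecondVariation ν (G₁ + G₂) (G₁ + G₂)
        - jacobianSecondVariation ν G₁ G₁ - jacobianSecondVariation ν G₂ G₂)
      = jacobianSecondVariation ν G₁ G₂ := by
  simp only [jacobianSecondVariation, add_mul, mul_add, trace_add, add_mulVec, dotProduct_add,
    add_dotProduct, trace_mul_comm G₁ G₂, dotProduct_comm (G₂ *ᵥ ν)]
  ring

theorem jacobianSecondVariation_tangentialGradient_self (M : Matrix (Fin 3) (Fin 3) ℝ)
    (ν : Fin 3 → ℝ) (hν : ν ⬝ᵥ ν = 1) :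
    jacobianSecondVariation ν (tangentialGradient ν M) (tangentialGradient ν M)
      = (trace M • 1 - M)ᵀ *ᵥ ν ⬝ᵥ (trace M • 1 - M)ᵀ *ᵥ ν + 2 * (ν ⬝ᵥ (adjugate M)ᵀ *ᵥ ν)
          - (ν ⬝ᵥ (trace M • 1 - M)ᵀ *ᵥ ν) ^ 2 := by
  set s := ν ⬝ᵥ M *ᵥ ν
  -- The cofactor comes from writing both sides in terms of `tr M`, `tr (M * M)`, `s`,
  -- `|Mᵀ ν|²`, `⟨M ν, Mᵀ ν⟩` and `ν ⬝ᵥ ν`.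
  have key : (trace M • 1 - M)ᵀ *ᵥ ν ⬝ᵥ (trace M • 1 - M)ᵀ *ᵥ ν
        + 2 * (ν ⬝ᵥ (adjugate M)ᵀ *ᵥ ν) - (ν ⬝ᵥ (trace M • 1 - M)ᵀ *ᵥ ν) ^ 2
        - jacobianSecondVariation ν (tangentialGradient ν M) (tangentialGradient ν M)
      = (ν ⬝ᵥ ν - 1) * (-trace M ^ 2 * (ν ⬝ᵥ ν - 1) - trace (M * M) + 2 * trace M * s - s ^ 2) := by
    simp only [dotProduct, mulVec, trace_fin_three, Fin.isValue, transpose_apply, Matrix.sub_apply,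
      Matrix.smul_apply, one_apply, smul_eq_mul, mul_ite, mul_one, mul_zero, Fin.sum_univ_three,
      ↓reduceIte, one_ne_zero, zero_sub, neg_mul, Fin.reduceEq, zero_ne_one, add_sub_cancel_right,
      adjugate_fin_three, of_apply, cons_val', cons_val_fin_one, cons_val_zero, cons_val_one, cons_val,
      jacobianSecondVariation, tangentialGradient, mul_apply, vecMulVec_apply, neg_add_rev, s]
    ring
  rw [hν] at key
  linarith

theorem iteratedDeriv_two_surfaceJacobian (M : Matrix (Fin 3) (Fin 3) ℝ) (ν : Fin 3 → ℝ)
    (hν : ν ⬝ᵥ ν = 1) :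
    iteratedDeriv 2 (fun t : ℝ => √(∑ i, ((adjugate (1 + t • M))ᵀ *ᵥ ν) i ^ 2)) 0
      = jacobianSecondVariation ν (tangentialGradient ν M) (tangentialGradient ν M) := by
  have hcurve (t : ℝ) (i : Fin 3) : ((adjugate (1 + t • M))ᵀ *ᵥ ν) i
      = ν i + t * ((trace M • 1 - M)ᵀ *ᵥ ν) i + t ^ 2 * ((adjugate M)ᵀ *ᵥ ν) i := by
    simp [adjugate_one_add_smul_fin_three, transpose_add, add_mulVec, smul_mulVec]
  simp_rw [hcurve]
  rw [iteratedDeriv_two_sqrt_sum_sq_quadratic _ _ _ hν,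
    jacobianSecondVariation_tangentialGradient_self M ν hν]

/-- Pointwise second shape derivative of the surface Jacobian: with
`Mᵢ = Dξᵢ(x)`, unit normal `ν`, `J M t = ‖cof(I + tM)ν‖`, and tangential gradient matrices
`Gᵢ = [∇_Γ ξᵢ] = (I − ννᵀ) Mᵢᵀ`, the polarized second derivative at `0` equals
`−tr(G₂ G₁) + (div_Γ ξ₁)(div_Γ ξ₂) + ⟨G₁ν, G₂ν⟩`. -/
theorem stmt7 (M₁ M₂ : Matrix (Fin 3) (Fin 3) ℝ) (ν : Fin 3 → ℝ)
    (hν : ∑ i, ν i ^ 2 = 1)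
    (J : Matrix (Fin 3) (Fin 3) ℝ → ℝ → ℝ)
    (hJ : ∀ M t, J M t =
      Real.sqrt (∑ i, ((Matrix.adjugate (1 + t • M)).transpose.mulVec ν i) ^ 2))
    (G₁ G₂ : Matrix (Fin 3) (Fin 3) ℝ)
    (hG₁ : G₁ = (1 - Matrix.vecMulVec ν ν) * M₁.transpose)
    (hG₂ : G₂ = (1 - Matrix.vecMulVec ν ν) * M₂.transpose) :
    (1 / 2 : ℝ) *
        (iteratedDeriv 2 (J (M₁ + M₂)) 0 - iteratedDeriv 2 (J M₁) 0
          - iteratedDeriv 2 (J M₂) 0)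
      = -Matrix.trace (G₂ * G₁) + Matrix.trace G₁ * Matrix.trace G₂
          + (G₁.mulVec ν ⬝ᵥ G₂.mulVec ν) := by
  have hν' : ν ⬝ᵥ ν = 1 := by simpa [dotProduct, sq] using hν
  have hJ' (M : Matrix (Fin 3) (Fin 3) ℝ) : iteratedDeriv 2 (J M) 0
      = jacobianSecondVariation ν (tangentialGradient ν M) (tangentialGradient ν M) := by
    rw [show J M = _ from funext (hJ M), iteratedDeriv_two_surfaceJacobian M ν hν']
  rw [hJ', hJ', hJ', tangentialGradient_add]
  subst hG₁ hG₂
  exact jacobianSecondVariation_polarization ν _ _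
end

section
/- At r = 0, the derivative of the pulled-back tangential gradient in the normal direction yields the commutator formula: for smooth u on a neighborhood of Γ, (∂/∂n)(∇_Γ u) − ∇_Γ(∂u/∂n) = −R_Γ ∇_Γ u, where R_Γ = [∇_Γ n] is the Weingarten (shape) operator. -/
open Matrix

/-- Partial derivative `∂f/∂xⱼ` at `x`. -/
noncomputable def pd (f : (Fin 3 → ℝ) → ℝ) (j : Fin 3) (x : Fin 3 → ℝ) : ℝ :=
  fderiv ℝ f x (Pi.single j 1)

/-- Full gradient `∇f(x)`. -/
noncomputable def grad3 (f : (Fin 3 → ℝ) → ℝ) (x : Fin 3 → ℝ) : Fin 3 → ℝ :=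
  fun i => pd f i x

/-- Tangential gradient `∇_Γ f = ∇f − (∇f·n) n` (with normal field `n`). -/
noncomputable def tgrad (f : (Fin 3 → ℝ) → ℝ) (n : (Fin 3 → ℝ) → (Fin 3 → ℝ))
    (x : Fin 3 → ℝ) : Fin 3 → ℝ :=
  grad3 f x - (grad3 f x ⬝ᵥ n x) • n x

/-- Commutator of the normal derivative with the tangential gradient:
`(∂/∂n)(∇_Γ u) − ∇_Γ(∂u/∂n) = −R_Γ ∇_Γ u` at a point `x` of `Γ`, where `R_Γ = [∇_Γ n]`
is the Weingarten operator and `n` is a smooth unit extension of the normal with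
symmetric derivative and `Dn·n = 0` at `x`. -/
theorem stmt11 (u : (Fin 3 → ℝ) → ℝ) (n : (Fin 3 → ℝ) → (Fin 3 → ℝ)) (x : Fin 3 → ℝ)
    (hu : ContDiff ℝ (⊤ : ℕ∞) u) (hn : ContDiff ℝ (⊤ : ℕ∞) n)
    (hunit : ∀ y, ∑ i, n y i ^ 2 = 1)
    (hsymm : ∀ a b : Fin 3, fderiv ℝ n x (Pi.single b 1) a = fderiv ℝ n x (Pi.single a 1) b)
    (hnn : fderiv ℝ n x (n x) = 0)
    (R : Matrix (Fin 3) (Fin 3) ℝ)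
    (hR : R = Matrix.of fun a b => tgrad (fun y => n y b) n x a) :
    fderiv ℝ (fun y => tgrad u n y) x (n x)
        - tgrad (fun y => grad3 u y ⬝ᵥ n y) n x
      = -(R.mulVec (tgrad u n x)) := by
  classical
  have hud : Differentiable ℝ u := hu.differentiable (by simp)
  have hf1 : ContDiff ℝ (⊤ : ℕ∞) (fderiv ℝ u) := hu.fderiv_right (by simp)
  set S : (Fin 3 → ℝ) →L[ℝ] (Fin 3 → ℝ) →L[ℝ] ℝ := fderiv ℝ (fderiv ℝ u) x with hSdef
  have hSsymm : ∀ v w, S v w = S w v :=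
    second_derivative_symmetric (fun y => (hud y).hasFDerivAt)
      ((hf1.differentiable (by simp) x).hasFDerivAt)
  -- pd facts
  have hpdc : ∀ j : Fin 3, ContDiff ℝ (⊤ : ℕ∞) (pd u j) := fun j =>
    hf1.clm_apply contDiff_const
  have hpdf : ∀ (j : Fin 3) (v : Fin 3 → ℝ), fderiv ℝ (pd u j) x v = S v (Pi.single j 1) := by
    intro j v
    have h := fderiv_clm_apply (hf1.differentiable (by simp) x) (differentiableAt_const (Pi.single j 1 : Fin 3 → ℝ))
    have h2 : fderiv ℝ (pd u j) x = (fderiv ℝ (fderiv ℝ u) x).flip (Pi.single j 1) := by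
      simp [fderiv_const] at h; exact h
    rw [h2]; rfl
  -- n component facts
  have hnd : Differentiable ℝ n := hn.differentiable (by simp)
  have hnc : ∀ a : Fin 3, ContDiff ℝ (⊤ : ℕ∞) (fun y => n y a) := fun a =>
    (ContinuousLinearMap.proj a : (Fin 3 → ℝ) →L[ℝ] ℝ).contDiff.comp hn
  have hnf : ∀ (a : Fin 3) (v : Fin 3 → ℝ), fderiv ℝ (fun y => n y a) x v = fderiv ℝ n x v a := by
    intro a v
    have h : fderiv ℝ ((ContinuousLinearMap.proj a : (Fin 3 → ℝ) →L[ℝ] ℝ) ∘ n) x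
        = (ContinuousLinearMap.proj a : (Fin 3 → ℝ) →L[ℝ] ℝ).comp (fderiv ℝ n x) := by
      rw [fderiv_comp x (ContinuousLinearMap.differentiableAt _) (hnd x),
        ContinuousLinearMap.fderiv]
    have h2 : fderiv ℝ (fun y => n y a) x = (ContinuousLinearMap.proj a : (Fin 3 → ℝ) →L[ℝ] ℝ).comp (fderiv ℝ n x) := h
    rw [h2]; rfl
  have hsingle : ∀ a : Fin 3, (fun j => if a = j then (1:ℝ) else 0) = Pi.single a 1 := by
    intro a; funext j; simp [Pi.single_apply, eq_comm]
  have hSexp : ∀ w : Fin 3 → ℝ, S (n x) w = ∑ a, n x a * S (Pi.single a 1) w := by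
    intro w
    conv_lhs => rw [pi_eq_sum_univ (n x)]
    simp only [hsingle, map_sum, _root_.map_smul, ContinuousLinearMap.coe_sum',
      Finset.sum_apply, ContinuousLinearMap.coe_smul', Pi.smul_apply, smul_eq_mul]
  have hC : ∀ a : Fin 3, ∑ b, n x b * fderiv ℝ n x (Pi.single b 1) a = 0 := by
    intro a
    have h0 : fderiv ℝ n x (n x) a = 0 := by rw [hnn]; rfl
    rw [← h0]
    conv_rhs => rw [pi_eq_sum_univ (n x)]
    simp only [hsingle, map_sum, _root_.map_smul, Finset.sum_apply, Pi.smul_apply, smul_eq_mul]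
  -- differentiability of pieces at x
  have hpdd : ∀ j : Fin 3, DifferentiableAt ℝ (pd u j) x := fun j => (hpdc j).differentiable (by simp) x
  have hncd : ∀ a : Fin 3, DifferentiableAt ℝ (fun y => n y a) x := fun a => (hnc a).differentiable (by simp) x
  have hsumd : DifferentiableAt ℝ (fun y => ∑ j, pd u j y * n y j) x :=
    DifferentiableAt.fun_sum fun j _ => ((hpdd j).mul (hncd j))
  -- derivative of the scalar product sum
  have hsum_fd : ∀ v : Fin 3 → ℝ, fderiv ℝ (fun y => ∑ j, pd u j y * n y j) x v
      = ∑ j, (pd u j x * fderiv ℝ n x v j + n x j * S v (Pi.single j 1)) := by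
    intro v
    rw [fderiv_fun_sum (A := fun j y => pd u j y * n y j) (fun j _ => ((hpdd j).mul (hncd j)))]
    rw [ContinuousLinearMap.sum_apply]
    refine Finset.sum_congr rfl fun j _ => ?_
    rw [fderiv_fun_mul (hpdd j) (hncd j)]
    simp only [ContinuousLinearMap.add_apply, ContinuousLinearMap.smul_apply, smul_eq_mul]
    rw [hpdf j v, hnf j v]
  -- Term 1
  have hcompd : ∀ i : Fin 3, DifferentiableAt ℝ (fun y => pd u i y - (∑ j, pd u j y * n y j) * n y i) x :=
    fun i => (hpdd i).sub (hsumd.mul (hncd i))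
  have htgeq : (fun y => tgrad u n y) = fun y i => pd u i y - (∑ j, pd u j y * n y j) * n y i := rfl
  have hT1fd : HasFDerivAt (fun y => tgrad u n y)
      (ContinuousLinearMap.pi fun i => fderiv ℝ (fun y => pd u i y - (∑ j, pd u j y * n y j) * n y i) x) x := by
    rw [htgeq]
    exact hasFDerivAt_pi.2 fun i => (hcompd i).hasFDerivAt
  have hT1 : ∀ i : Fin 3, fderiv ℝ (fun y => tgrad u n y) x (n x) i
      = S (n x) (Pi.single i 1) - n x i * ∑ j, n x j * S (n x) (Pi.single j 1) := by
    intro i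
    rw [hT1fd.fderiv]
    show fderiv ℝ (fun y => pd u i y - (∑ j, pd u j y * n y j) * n y i) x (n x) = _
    rw [fderiv_fun_sub (g := fun y => (∑ j, pd u j y * n y j) * n y i) (hpdd i) (hsumd.mul (hncd i))]
    rw [ContinuousLinearMap.sub_apply, hpdf i]
    rw [fderiv_fun_mul hsumd (hncd i)]
    simp only [ContinuousLinearMap.add_apply, ContinuousLinearMap.smul_apply, smul_eq_mul]
    rw [hnf i, hsum_fd, hnn]
    simp [mul_zero, zero_mul, add_zero, zero_add, Pi.zero_apply]
  -- Term 2
  have hveq : (fun y => grad3 u y ⬝ᵥ n y) = fun y => ∑ j, pd u j y * n y j := rfl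
  have hpdv : ∀ a : Fin 3, pd (fun y => grad3 u y ⬝ᵥ n y) a x
      = ∑ j, (pd u j x * fderiv ℝ n x (Pi.single a 1) j + n x j * S (Pi.single a 1) (Pi.single j 1)) := by
    intro a
    show fderiv ℝ (fun y => grad3 u y ⬝ᵥ n y) x (Pi.single a 1) = _
    rw [hveq, hsum_fd]
  have hT2 : ∀ i : Fin 3, tgrad (fun y => grad3 u y ⬝ᵥ n y) n x i
      = pd (fun y => grad3 u y ⬝ᵥ n y) i x
        - (∑ a, pd (fun y => grad3 u y ⬝ᵥ n y) a x * n x a) * n x i := fun i => rfl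
  -- R entries
  have hRentry : ∀ a b : Fin 3, R a b
      = fderiv ℝ n x (Pi.single a 1) b
        - (∑ c, fderiv ℝ n x (Pi.single c 1) b * n x c) * n x a := by
    intro a b
    have hp : ∀ c : Fin 3, pd (fun y => n y b) c x = fderiv ℝ n x (Pi.single c 1) b := fun c => hnf b _
    rw [hR]
    show pd (fun y => n y b) a x - (∑ c, pd (fun y => n y b) c x * n x c) * n x a = _
    simp only [hp]
  have htgu : ∀ b : Fin 3, tgrad u n x b = pd u b x - (∑ c, pd u c x * n x c) * n x b := fun b => rfl
  -- assemble
  funext i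
  rw [Pi.sub_apply, hT1 i, hT2 i]
  rw [Pi.neg_apply]
  rw [show R.mulVec (tgrad u n x) i = ∑ b, R i b * tgrad u n x b from by
    simp [Matrix.mulVec, dotProduct]]
  simp only [hRentry, htgu, hpdv, hSexp, Fin.sum_univ_three]
  have hCe : ∀ a : Fin 3,
      n x 0 * fderiv ℝ n x (Pi.single 0 1) a + n x 1 * fderiv ℝ n x (Pi.single 1 1) a
        + n x 2 * fderiv ℝ n x (Pi.single 2 1) a = 0 := by
    intro a; have h := hC a; rwa [Fin.sum_univ_three] at h
  linear_combination
    n x 0 * hSsymm (Pi.single 0 1) (Pi.single i 1) + n x 1 * hSsymm (Pi.single 1 1) (Pi.single i 1)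
      + n x 2 * hSsymm (Pi.single 2 1) (Pi.single i 1)
    - (pd u 0 x * n x 0 + pd u 1 x * n x 1 + pd u 2 x * n x 2) *
        (n x 0 * hsymm 0 i + n x 1 * hsymm 1 i + n x 2 * hsymm 2 i)
    - (pd u 0 x * n x 0 + pd u 1 x * n x 1 + pd u 2 x * n x 2) * hCe i
    + n x i * (pd u 0 x * n x 0 + pd u 1 x * n x 1 + pd u 2 x * n x 2) *
        (n x 0 * hCe 0 + n x 1 * hCe 1 + n x 2 * hCe 2)
end

section
/- For smooth scalar u on a neighborhood of a smooth compact closed surface Γ ⊂ ℝ³, the normal-derivative commutator for the tangential vector curl satisfies (∂/∂n)(curl_Γ u) − curl_Γ(∂u/∂n) = R_Γ curl_Γ u − H_Γ curl_Γ u, where curl_Γ u = ∇_Γ u × n is the tangential vector curl, R_Γ = [∇_Γ n] the Weingarten operator, and H_Γ = div_Γ n the (additive) mean curvature. -/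
open Matrix


lemma key' {X : Type*} [NormedAddCommGroup X] [NormedSpace ℝ X]
    (φ : (Fin 3 → ℝ) →L[ℝ] X) (v : Fin 3 → ℝ) :
    φ v = ∑ a, v a • φ (Pi.single a 1) := by
  conv_lhs => rw [← Finset.univ_sum_single v]
  rw [map_sum]
  congr 1; ext a
  rw [← _root_.map_smul]
  congr 1
  ext j; by_cases h : j = a <;> simp [Pi.single_apply, h]

lemma fderiv_proj' (F : (Fin 3 → ℝ) → (Fin 3 → ℝ)) (x v : Fin 3 → ℝ)
    (hF : DifferentiableAt ℝ F x) (k : Fin 3) :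
    fderiv ℝ F x v k = fderiv ℝ (fun y => F y k) x v := by
  have h : ∀ i, DifferentiableAt ℝ (fun y => F y i) x := fun i =>
    (ContinuousLinearMap.proj (R := ℝ) (φ := fun _ : Fin 3 => ℝ) i).differentiableAt.comp x hF
  have := fderiv_pi (𝕜 := ℝ) (φ := fun i y => F y i) (x := x) h
  rw [show F = (fun y i => F y i) from rfl, this]
  simp

lemma Dmul' (f g : (Fin 3 → ℝ) → ℝ) (x v : Fin 3 → ℝ)
    (hf : DifferentiableAt ℝ f x) (hg : DifferentiableAt ℝ g x) :
    fderiv ℝ (fun y => f y * g y) x v = fderiv ℝ f x v * g x + f x * fderiv ℝ g x v := by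
  rw [fderiv_fun_mul hf hg]; simp; ring

lemma Dsub' (f g : (Fin 3 → ℝ) → ℝ) (x v : Fin 3 → ℝ)
    (hf : DifferentiableAt ℝ f x) (hg : DifferentiableAt ℝ g x) :
    fderiv ℝ (fun y => f y - g y) x v = fderiv ℝ f x v - fderiv ℝ g x v := by
  rw [fderiv_fun_sub hf hg]; simp

lemma Dadd' (f g : (Fin 3 → ℝ) → ℝ) (x v : Fin 3 → ℝ)
    (hf : DifferentiableAt ℝ f x) (hg : DifferentiableAt ℝ g x) :
    fderiv ℝ (fun y => f y + g y) x v = fderiv ℝ f x v + fderiv ℝ g x v := by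
  rw [fderiv_fun_add hf hg]; simp


/-- Full divergence `div v`. -/
noncomputable def div3 (v : (Fin 3 → ℝ) → (Fin 3 → ℝ)) (x : Fin 3 → ℝ) : ℝ :=
  ∑ i, pd (fun y => v y i) i x

/-- Surface divergence `div_Γ v = div v − ⟨Dv·n, n⟩`. -/
noncomputable def divGamma (v : (Fin 3 → ℝ) → (Fin 3 → ℝ)) (n : (Fin 3 → ℝ) → (Fin 3 → ℝ))
    (x : Fin 3 → ℝ) : ℝ :=
  div3 v x - fderiv ℝ v x (n x) ⬝ᵥ n x

/-- Tangential vector curl of a scalar: `curl_Γ f = ∇f × n`. -/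
noncomputable def vcurlG (f : (Fin 3 → ℝ) → ℝ) (n : (Fin 3 → ℝ) → (Fin 3 → ℝ))
    (x : Fin 3 → ℝ) : Fin 3 → ℝ :=
  crossProduct (grad3 f x) (n x)

/-- Commutator of the normal derivative with the tangential vector curl:
`(∂/∂n)(curl_Γ u) − curl_Γ(∂u/∂n) = R_Γ curl_Γ u − H_Γ curl_Γ u` at `x ∈ Γ`, where
`R_Γ = [∇_Γ n]` and `H_Γ = div_Γ n` is the mean curvature. -/
theorem stmt12 (u : (Fin 3 → ℝ) → ℝ) (n : (Fin 3 → ℝ) → (Fin 3 → ℝ)) (x : Fin 3 → ℝ)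
    (hu : ContDiff ℝ (⊤ : ℕ∞) u) (hn : ContDiff ℝ (⊤ : ℕ∞) n)
    (hunit : ∀ y, ∑ i, n y i ^ 2 = 1)
    (hsymm : ∀ a b : Fin 3, fderiv ℝ n x (Pi.single b 1) a = fderiv ℝ n x (Pi.single a 1) b)
    (hnn : fderiv ℝ n x (n x) = 0)
    (R : Matrix (Fin 3) (Fin 3) ℝ)
    (hR : R = Matrix.of fun a b => tgrad (fun y => n y b) n x a) :
    fderiv ℝ (fun y => vcurlG u n y) x (n x)
        - vcurlG (fun y => grad3 u y ⬝ᵥ n y) n x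
      = R.mulVec (vcurlG u n x) - divGamma n n x • vcurlG u n x := by
  subst hR
  have hdn : Differentiable ℝ n := hn.differentiable (by simp)
  have hfd : ContDiff ℝ (⊤ : ℕ∞) (fderiv ℝ u) := hu.fderiv_right (by simp)
  have hpdc : ∀ j, ContDiff ℝ (⊤ : ℕ∞) (fun y => pd u j y) := fun j => hfd.clm_apply contDiff_const
  have hpdd : ∀ j, Differentiable ℝ (fun y => pd u j y) := fun j => (hpdc j).differentiable (by simp)
  have hnk : ∀ k, Differentiable ℝ (fun y => n y k) := fun k => (contDiff_pi.mp hn k).differentiable (by simp)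
  have hsnd : ∀ v w, fderiv ℝ (fderiv ℝ u) x v w = fderiv ℝ (fderiv ℝ u) x w v :=
    hu.contDiffAt.isSymmSndFDerivAt (by rw [minSmoothness_of_isRCLikeNormedField]; exact WithTop.coe_le_coe.mpr le_top)
  have d0 : ∀ a b : Fin 3, DifferentiableAt ℝ (fun y => pd u a y * n y b) x :=
    fun a b => ((hpdd a).mul (hnk b)) x
  have hDn : ∀ (v : Fin 3 → ℝ) (k : Fin 3), fderiv ℝ (fun y => n y k) x v = fderiv ℝ n x v k :=
    fun v k => (fderiv_proj' n x v (hdn x) k).symm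
  have hDnN : ∀ k, fderiv ℝ (fun y => n y k) x (n x) = 0 := by
    intro k; rw [hDn, hnn]; rfl
  have hpdn : ∀ a b : Fin 3, pd (fun y => n y b) a x = fderiv ℝ n x (Pi.single a 1) b := by
    intro a b
    show fderiv ℝ (fun y => n y b) x (Pi.single a 1) = _
    rw [hDn]
  have hDpd : ∀ (j : Fin 3) (v : Fin 3 → ℝ), fderiv ℝ (fun y => pd u j y) x v
      = fderiv ℝ (fderiv ℝ u) x v (Pi.single j 1) := by
    intro j v
    have h := fderiv_clm_apply (c := fderiv ℝ u) (u := fun _ => Pi.single j 1) (x := x)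
      ((hfd.differentiable (by simp)).differentiableAt) (differentiableAt_const _)
    simp only [fderiv_fun_const, Pi.zero_apply, ContinuousLinearMap.comp_zero, zero_add] at h
    show fderiv ℝ (fun y => (fderiv ℝ u y) (Pi.single j 1)) x v = _
    rw [h]; rfl
  have hDpdN : ∀ j : Fin 3, fderiv ℝ (fun y => pd u j y) x (n x)
      = n x 0 * fderiv ℝ (fderiv ℝ u) x (Pi.single 0 1) (Pi.single j 1)
      + n x 1 * fderiv ℝ (fderiv ℝ u) x (Pi.single 1 1) (Pi.single j 1)
      + n x 2 * fderiv ℝ (fderiv ℝ u) x (Pi.single 2 1) (Pi.single j 1) := by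
    intro j
    rw [hDpd j (n x), key' (fderiv ℝ (fderiv ℝ u) x) (n x)]
    simp [Fin.sum_univ_three, ContinuousLinearMap.add_apply, ContinuousLinearMap.smul_apply,
      smul_eq_mul]
  have hAN : ∀ k : Fin 3, n x 0 * fderiv ℝ n x (Pi.single 0 1) k
      + n x 1 * fderiv ℝ n x (Pi.single 1 1) k + n x 2 * fderiv ℝ n x (Pi.single 2 1) k = 0 := by
    intro k
    have h := key' (fderiv ℝ n x) (n x)
    rw [hnn] at h
    have h2 := congrFun h.symm k
    simpa [Fin.sum_univ_three, Pi.smul_apply, smul_eq_mul] using h2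
  have hv0 : (fun y => vcurlG u n y 0) = fun y => pd u 1 y * n y 2 - pd u 2 y * n y 1 := by
    funext y; simp [vcurlG, cross_apply, grad3]
  have hv1 : (fun y => vcurlG u n y 1) = fun y => pd u 2 y * n y 0 - pd u 0 y * n y 2 := by
    funext y; simp [vcurlG, cross_apply, grad3]
  have hv2 : (fun y => vcurlG u n y 2) = fun y => pd u 0 y * n y 1 - pd u 1 y * n y 0 := by
    funext y; simp [vcurlG, cross_apply, grad3]
  have hvc : DifferentiableAt ℝ (fun y => vcurlG u n y) x := by
    rw [show (fun y => vcurlG u n y) = (fun y i => vcurlG u n y i) from rfl]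
    apply differentiableAt_pi.mpr
    intro i
    fin_cases i
    · exact hv0 ▸ ((d0 1 2).sub (d0 2 1))
    · exact hv1 ▸ ((d0 2 0).sub (d0 0 2))
    · exact hv2 ▸ ((d0 0 1).sub (d0 1 0))
  have hfun : (fun y => grad3 u y ⬝ᵥ n y)
      = (fun y => pd u 0 y * n y 0 + pd u 1 y * n y 1 + pd u 2 y * n y 2) := by
    funext y; simp [grad3, dotProduct, Fin.sum_univ_three]

  have hH : ∀ j : Fin 3, pd (fun y => grad3 u y ⬝ᵥ n y) j x
      = ((fderiv ℝ (fderiv ℝ u) x (Pi.single j 1) (Pi.single 0 1) * n x 0 + pd u 0 x * fderiv ℝ n x (Pi.single j 1) 0) + (fderiv ℝ (fderiv ℝ u) x (Pi.single j 1) (Pi.single 1 1) * n x 1 + pd u 1 x * fderiv ℝ n x (Pi.single j 1) 1) + (fderiv ℝ (fderiv ℝ u) x (Pi.single j 1) (Pi.single 2 1) * n x 2 + pd u 2 x * fderiv ℝ n x (Pi.single j 1) 2)) := by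
    intro j
    show fderiv ℝ (fun y => grad3 u y ⬝ᵥ n y) x (Pi.single j 1) = _
    rw [hfun, Dadd' _ _ _ _ ((d0 0 0).fun_add (d0 1 1)) (d0 2 2),
      Dadd' _ _ _ _ (d0 0 0) (d0 1 1),
      Dmul' _ _ _ _ (hpdd 0 x) (hnk 0 x), Dmul' _ _ _ _ (hpdd 1 x) (hnk 1 x),
      Dmul' _ _ _ _ (hpdd 2 x) (hnk 2 x), hDpd 0, hDpd 1, hDpd 2, hDn, hDn, hDn]
    try ring

  have hE1_0 : fderiv ℝ (fun y => vcurlG u n y) x (n x) 0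
      = (n x 0 * fderiv ℝ (fderiv ℝ u) x (Pi.single 0 1) (Pi.single 1 1) + n x 1 * fderiv ℝ (fderiv ℝ u) x (Pi.single 1 1) (Pi.single 1 1) + n x 2 * fderiv ℝ (fderiv ℝ u) x (Pi.single 2 1) (Pi.single 1 1)) * n x 2 - (n x 0 * fderiv ℝ (fderiv ℝ u) x (Pi.single 0 1) (Pi.single 2 1) + n x 1 * fderiv ℝ (fderiv ℝ u) x (Pi.single 1 1) (Pi.single 2 1) + n x 2 * fderiv ℝ (fderiv ℝ u) x (Pi.single 2 1) (Pi.single 2 1)) * n x 1 := by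
    rw [fderiv_proj' _ x (n x) hvc 0, hv0,
      Dsub' _ _ _ _ (d0 1 2) (d0 2 1),
      Dmul' _ _ _ _ (hpdd 1 x) (hnk 2 x), Dmul' _ _ _ _ (hpdd 2 x) (hnk 1 x),
      hDnN 2, hDnN 1, hDpdN 1, hDpdN 2]
    ring

  have hE2_0 : vcurlG (fun y => grad3 u y ⬝ᵥ n y) n x 0
      = ((fderiv ℝ (fderiv ℝ u) x (Pi.single 1 1) (Pi.single 0 1) * n x 0 + pd u 0 x * fderiv ℝ n x (Pi.single 1 1) 0) + (fderiv ℝ (fderiv ℝ u) x (Pi.single 1 1) (Pi.single 1 1) * n x 1 + pd u 1 x * fderiv ℝ n x (Pi.single 1 1) 1) + (fderiv ℝ (fderiv ℝ u) x (Pi.single 1 1) (Pi.single 2 1) * n x 2 + pd u 2 x * fderiv ℝ n x (Pi.single 1 1) 2)) * n x 2 - ((fderiv ℝ (fderiv ℝ u) x (Pi.single 2 1) (Pi.single 0 1) * n x 0 + pd u 0 x * fderiv ℝ n x (Pi.single 2 1) 0) + (fderiv ℝ (fderiv ℝ u) x (Pi.single 2 1) (Pi.single 1 1) * n x 1 + pd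 u 1 x * fderiv ℝ n x (Pi.single 2 1) 1) + (fderiv ℝ (fderiv ℝ u) x (Pi.single 2 1) (Pi.single 2 1) * n x 2 + pd u 2 x * fderiv ℝ n x (Pi.single 2 1) 2)) * n x 1 := by
    have hcomp : vcurlG (fun y => grad3 u y ⬝ᵥ n y) n x 0
        = pd (fun y => grad3 u y ⬝ᵥ n y) 1 x * n x 2
          - pd (fun y => grad3 u y ⬝ᵥ n y) 2 x * n x 1 := by
      simp only [vcurlG, cross_apply, Matrix.cons_val_zero, Matrix.cons_val_one,
        Matrix.head_cons, Matrix.cons_val_two, Matrix.tail_cons]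
      rfl
    rw [hcomp, hH 1, hH 2]

  have hE1_1 : fderiv ℝ (fun y => vcurlG u n y) x (n x) 1
      = (n x 0 * fderiv ℝ (fderiv ℝ u) x (Pi.single 0 1) (Pi.single 2 1) + n x 1 * fderiv ℝ (fderiv ℝ u) x (Pi.single 1 1) (Pi.single 2 1) + n x 2 * fderiv ℝ (fderiv ℝ u) x (Pi.single 2 1) (Pi.single 2 1)) * n x 0 - (n x 0 * fderiv ℝ (fderiv ℝ u) x (Pi.single 0 1) (Pi.single 0 1) + n x 1 * fderiv ℝ (fderiv ℝ u) x (Pi.single 1 1) (Pi.single 0 1) + n x 2 * fderiv ℝ (fderiv ℝ u) x (Pi.single 2 1) (Pi.single 0 1)) * n x 2 := by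
    rw [fderiv_proj' _ x (n x) hvc 1, hv1,
      Dsub' _ _ _ _ (d0 2 0) (d0 0 2),
      Dmul' _ _ _ _ (hpdd 2 x) (hnk 0 x), Dmul' _ _ _ _ (hpdd 0 x) (hnk 2 x),
      hDnN 0, hDnN 2, hDpdN 2, hDpdN 0]
    ring

  have hE2_1 : vcurlG (fun y => grad3 u y ⬝ᵥ n y) n x 1
      = ((fderiv ℝ (fderiv ℝ u) x (Pi.single 2 1) (Pi.single 0 1) * n x 0 + pd u 0 x * fderiv ℝ n x (Pi.single 2 1) 0) + (fderiv ℝ (fderiv ℝ u) x (Pi.single 2 1) (Pi.single 1 1) * n x 1 + pd u 1 x * fderiv ℝ n x (Pi.single 2 1) 1) + (fderiv ℝ (fderiv ℝ u) x (Pi.single 2 1) (Pi.single 2 1) * n x 2 + pd u 2 x * fderiv ℝ n x (Pi.single 2 1) 2)) * n x 0 - ((fderiv ℝ (fderiv ℝ u) x (Pi.single 0 1) (Pi.single 0 1) * n x 0 + pd u 0 x * fderiv ℝ n x (Pi.single 0 1) 0) + (fderiv ℝ (fderiv ℝ u) x (Pi.single 0 1) (Pi.single 1 1) * n x 1 + pd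 u 1 x * fderiv ℝ n x (Pi.single 0 1) 1) + (fderiv ℝ (fderiv ℝ u) x (Pi.single 0 1) (Pi.single 2 1) * n x 2 + pd u 2 x * fderiv ℝ n x (Pi.single 0 1) 2)) * n x 2 := by
    have hcomp : vcurlG (fun y => grad3 u y ⬝ᵥ n y) n x 1
        = pd (fun y => grad3 u y ⬝ᵥ n y) 2 x * n x 0
          - pd (fun y => grad3 u y ⬝ᵥ n y) 0 x * n x 2 := by
      simp only [vcurlG, cross_apply, Matrix.cons_val_zero, Matrix.cons_val_one,
        Matrix.head_cons, Matrix.cons_val_two, Matrix.tail_cons]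
      rfl
    rw [hcomp, hH 2, hH 0]

  have hE1_2 : fderiv ℝ (fun y => vcurlG u n y) x (n x) 2
      = (n x 0 * fderiv ℝ (fderiv ℝ u) x (Pi.single 0 1) (Pi.single 0 1) + n x 1 * fderiv ℝ (fderiv ℝ u) x (Pi.single 1 1) (Pi.single 0 1) + n x 2 * fderiv ℝ (fderiv ℝ u) x (Pi.single 2 1) (Pi.single 0 1)) * n x 1 - (n x 0 * fderiv ℝ (fderiv ℝ u) x (Pi.single 0 1) (Pi.single 1 1) + n x 1 * fderiv ℝ (fderiv ℝ u) x (Pi.single 1 1) (Pi.single 1 1) + n x 2 * fderiv ℝ (fderiv ℝ u) x (Pi.single 2 1) (Pi.single 1 1)) * n x 0 := by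
    rw [fderiv_proj' _ x (n x) hvc 2, hv2,
      Dsub' _ _ _ _ (d0 0 1) (d0 1 0),
      Dmul' _ _ _ _ (hpdd 0 x) (hnk 1 x), Dmul' _ _ _ _ (hpdd 1 x) (hnk 0 x),
      hDnN 1, hDnN 0, hDpdN 0, hDpdN 1]
    ring

  have hE2_2 : vcurlG (fun y => grad3 u y ⬝ᵥ n y) n x 2
      = ((fderiv ℝ (fderiv ℝ u) x (Pi.single 0 1) (Pi.single 0 1) * n x 0 + pd u 0 x * fderiv ℝ n x (Pi.single 0 1) 0) + (fderiv ℝ (fderiv ℝ u) x (Pi.single 0 1) (Pi.single 1 1) * n x 1 + pd u 1 x * fderiv ℝ n x (Pi.single 0 1) 1) + (fderiv ℝ (fderiv ℝ u) x (Pi.single 0 1) (Pi.single 2 1) * n x 2 + pd u 2 x * fderiv ℝ n x (Pi.single 0 1) 2)) * n x 1 - ((fderiv ℝ (fderiv ℝ u) x (Pi.single 1 1) (Pi.single 0 1) * n x 0 + pd u 0 x * fderiv ℝ n x (Pi.single 1 1) 0) + (fderiv ℝ (fderiv ℝ u) x (Pi.single 1 1) (Pi.single 1 1) * n x 1 + pd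 u 1 x * fderiv ℝ n x (Pi.single 1 1) 1) + (fderiv ℝ (fderiv ℝ u) x (Pi.single 1 1) (Pi.single 2 1) * n x 2 + pd u 2 x * fderiv ℝ n x (Pi.single 1 1) 2)) * n x 0 := by
    have hcomp : vcurlG (fun y => grad3 u y ⬝ᵥ n y) n x 2
        = pd (fun y => grad3 u y ⬝ᵥ n y) 0 x * n x 1
          - pd (fun y => grad3 u y ⬝ᵥ n y) 1 x * n x 0 := by
      simp only [vcurlG, cross_apply, Matrix.cons_val_zero, Matrix.cons_val_one,
        Matrix.head_cons, Matrix.cons_val_two, Matrix.tail_cons]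
      rfl
    rw [hcomp, hH 0, hH 1]

  have hAN0 := hAN 0
  have hAN1 := hAN 1
  have hAN2 := hAN 2
  simp only [hsymm 1 0, hsymm 2 0, hsymm 2 1] at hAN1 hAN2

  funext i
  fin_cases i

  · show fderiv ℝ (fun y => vcurlG u n y) x (n x) 0
          - vcurlG (fun y => grad3 u y ⬝ᵥ n y) n x 0
        = (Matrix.of fun a b => tgrad (fun y => n y b) n x a).mulVec (vcurlG u n x) 0
          - divGamma n n x * vcurlG u n x 0
    rw [hE1_0, hE2_0]
    simp only [Matrix.mulVec, dotProduct, Fin.sum_univ_three, tgrad, Matrix.of_apply,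
      Pi.sub_apply, Pi.smul_apply, smul_eq_mul, grad3, vcurlG, cross_apply, divGamma, div3,
      hpdn, hnn, zero_dotProduct, Pi.zero_apply, zero_mul, mul_zero, add_zero, zero_add, sub_zero, Matrix.cons_val_zero, Matrix.cons_val_one,
      Matrix.head_cons, Matrix.cons_val_two, Matrix.tail_cons, Fin.isValue]
    simp only [hsymm 1 0, hsymm 2 0, hsymm 2 1,
      hsnd (Pi.single 1 1) (Pi.single 0 1), hsnd (Pi.single 2 1) (Pi.single 0 1),
      hsnd (Pi.single 2 1) (Pi.single 1 1)]
    linear_combination (n x 0 * n x 2 * pd u 1 x - n x 0 * n x 1 * pd u 2 x) * hAN0 + (n x 0 * n x 0 * pd u 2 x - n x 0 * n x 2 * pd u 0 x - pd u 2 x) * hAN1 + (n x 0 * n x 1 * pd u 0 x - n x 0 * n x 0 * pd u 1 x + pd u 1 x) * hAN2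

  · show fderiv ℝ (fun y => vcurlG u n y) x (n x) 1
          - vcurlG (fun y => grad3 u y ⬝ᵥ n y) n x 1
        = (Matrix.of fun a b => tgrad (fun y => n y b) n x a).mulVec (vcurlG u n x) 1
          - divGamma n n x * vcurlG u n x 1
    rw [hE1_1, hE2_1]
    simp only [Matrix.mulVec, dotProduct, Fin.sum_univ_three, tgrad, Matrix.of_apply,
      Pi.sub_apply, Pi.smul_apply, smul_eq_mul, grad3, vcurlG, cross_apply, divGamma, div3,
      hpdn, hnn, zero_dotProduct, Pi.zero_apply, zero_mul, mul_zero, add_zero, zero_add, sub_zero, Matrix.cons_val_zero, Matrix.cons_val_one,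
      Matrix.head_cons, Matrix.cons_val_two, Matrix.tail_cons, Fin.isValue]
    simp only [hsymm 1 0, hsymm 2 0, hsymm 2 1,
      hsnd (Pi.single 1 1) (Pi.single 0 1), hsnd (Pi.single 2 1) (Pi.single 0 1),
      hsnd (Pi.single 2 1) (Pi.single 1 1)]
    linear_combination (n x 1 * n x 2 * pd u 1 x - n x 1 * n x 1 * pd u 2 x + pd u 2 x) * hAN0 + (n x 0 * n x 1 * pd u 2 x - n x 1 * n x 2 * pd u 0 x) * hAN1 + (n x 1 * n x 1 * pd u 0 x - n x 0 * n x 1 * pd u 1 x - pd u 0 x) * hAN2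

  · show fderiv ℝ (fun y => vcurlG u n y) x (n x) 2
          - vcurlG (fun y => grad3 u y ⬝ᵥ n y) n x 2
        = (Matrix.of fun a b => tgrad (fun y => n y b) n x a).mulVec (vcurlG u n x) 2
          - divGamma n n x * vcurlG u n x 2
    rw [hE1_2, hE2_2]
    simp only [Matrix.mulVec, dotProduct, Fin.sum_univ_three, tgrad, Matrix.of_apply,
      Pi.sub_apply, Pi.smul_apply, smul_eq_mul, grad3, vcurlG, cross_apply, divGamma, div3,
      hpdn, hnn, zero_dotProduct, Pi.zero_apply, zero_mul, mul_zero, add_zero, zero_add, sub_zero, Matrix.cons_val_zero, Matrix.cons_val_one,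
      Matrix.head_cons, Matrix.cons_val_two, Matrix.tail_cons, Fin.isValue]
    simp only [hsymm 1 0, hsymm 2 0, hsymm 2 1,
      hsnd (Pi.single 1 1) (Pi.single 0 1), hsnd (Pi.single 2 1) (Pi.single 0 1),
      hsnd (Pi.single 2 1) (Pi.single 1 1)]
    linear_combination (n x 2 * n x 2 * pd u 1 x - n x 1 * n x 2 * pd u 2 x - pd u 1 x) * hAN0 + (n x 0 * n x 2 * pd u 2 x - n x 2 * n x 2 * pd u 0 x + pd u 0 x) * hAN1 + (n x 1 * n x 2 * pd u 0 x - n x 0 * n x 2 * pd u 1 x) * hAN2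
end

section
/- For a smooth tangential vector field u on a smooth compact closed surface Γ ⊂ ℝ³ (extended smoothly to a neighborhood), the normal-derivative commutator for the surface divergence satisfies (∂/∂n)(div_Γ u) − div_Γ(∂u/∂n) = −tr(R_Γ [∇_Γ u]), with R_Γ = [∇_Γ n]. -/
open Matrix

lemma vec_expand (w : Fin 3 → ℝ) : ∑ c, w c • (Pi.single c 1 : Fin 3 → ℝ) = w := by
  funext i
  simp [Finset.sum_apply, Pi.single_apply]

lemma clm_expand {F : Type*} [NormedAddCommGroup F] [NormedSpace ℝ F]
    (L : (Fin 3 → ℝ) →L[ℝ] F) (w : Fin 3 → ℝ) :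
    L w = ∑ c, w c • L (Pi.single c 1) := by
  conv_lhs => rw [← vec_expand w]
  rw [map_sum]
  simp [_root_.map_smul]

lemma fderiv_pi_apply {v : (Fin 3 → ℝ) → (Fin 3 → ℝ)} {y : Fin 3 → ℝ}
    (hv : ∀ a, DifferentiableAt ℝ (fun z => v z a) y) (r : Fin 3 → ℝ) (a : Fin 3) :
    fderiv ℝ v y r a = fderiv ℝ (fun z => v z a) y r := by
  have h : fderiv ℝ (fun x i => v x i) y
      = ContinuousLinearMap.pi (fun i => fderiv ℝ (fun z => v z i) y) := fderiv_pi hv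
  have h2 : fderiv ℝ v y = ContinuousLinearMap.pi (fun i => fderiv ℝ (fun z => v z i) y) := h
  rw [h2]
  rfl

lemma contDiff_pd {f : (Fin 3 → ℝ) → ℝ} (hf : ContDiff ℝ (⊤ : ℕ∞) f) (j : Fin 3) :
    ContDiff ℝ (⊤ : ℕ∞) (pd f j) :=
  (hf.fderiv_right (by simp)).clm_apply contDiff_const

lemma schwarz_pd {f : (Fin 3 → ℝ) → ℝ} (hf : ContDiff ℝ (⊤ : ℕ∞) f) (x v w : Fin 3 → ℝ) :
    fderiv ℝ (fun y => fderiv ℝ f y w) x v = fderiv ℝ (fun y => fderiv ℝ f y v) x w := by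
  have hdf : Differentiable ℝ f := hf.differentiable (by simp)
  have h2 : DifferentiableAt ℝ (fderiv ℝ f) x :=
    ((hf.fderiv_right (m := (⊤ : ℕ∞)) (by simp)).differentiable (by simp)) x
  have key : ∀ a : Fin 3 → ℝ, fderiv ℝ (fun y => fderiv ℝ f y a) x
      = (fderiv ℝ (fderiv ℝ f) x).flip a := by
    intro a
    have h3 := fderiv_clm_apply (c := fderiv ℝ f) (u := fun _ => a) h2 (differentiableAt_const a)
    simpa using h3
  rw [key, key]
  exact second_derivative_symmetric (fun y => (hdf y).hasFDerivAt) h2.hasFDerivAt v w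

lemma schwarz_pd' {f : (Fin 3 → ℝ) → ℝ} (hf : ContDiff ℝ (⊤ : ℕ∞) f) (x : Fin 3 → ℝ) (b c : Fin 3) :
    fderiv ℝ (pd f b) x (Pi.single c 1) = fderiv ℝ (pd f c) x (Pi.single b 1) :=
  schwarz_pd hf x (Pi.single c 1) (Pi.single b 1)

lemma fderiv_mul_apply {f g : (Fin 3 → ℝ) → ℝ} {x v : Fin 3 → ℝ}
    (hf : DifferentiableAt ℝ f x) (hg : DifferentiableAt ℝ g x) :
    fderiv ℝ (fun y => f y * g y) x v = f x * fderiv ℝ g x v + g x * fderiv ℝ f x v := by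
  rw [fderiv_fun_mul hf hg]
  simp

lemma fderiv_sum_apply3 {A : Fin 3 → (Fin 3 → ℝ) → ℝ} {x v : Fin 3 → ℝ}
    (h : ∀ i, DifferentiableAt ℝ (A i) x) :
    fderiv ℝ (fun y => ∑ i, A i y) x v = ∑ i, fderiv ℝ (A i) x v := by
  rw [fderiv_fun_sum (fun i _ => h i)]
  simp

/-- Commutator of the normal derivative with the surface divergence,
for a tangential field `u`: `(∂/∂n)(div_Γ u) − div_Γ(∂u/∂n) = −tr(R_Γ [∇_Γ u])` at `x ∈ Γ`,
with `R_Γ = [∇_Γ n]` and `[∇_Γ u]` the matrix of tangential gradients of the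
components of `u`. -/
theorem stmt13 (u n : (Fin 3 → ℝ) → (Fin 3 → ℝ)) (x : Fin 3 → ℝ)
    (hu : ContDiff ℝ (⊤ : ℕ∞) u) (hn : ContDiff ℝ (⊤ : ℕ∞) n)
    (hunit : ∀ y, ∑ i, n y i ^ 2 = 1)
    (htang : ∀ y, u y ⬝ᵥ n y = 0)
    (hsymm : ∀ a b : Fin 3, fderiv ℝ n x (Pi.single b 1) a = fderiv ℝ n x (Pi.single a 1) b)
    (hnn : fderiv ℝ n x (n x) = 0)
    (R Gu : Matrix (Fin 3) (Fin 3) ℝ)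
    (hR : R = Matrix.of fun a b => tgrad (fun y => n y b) n x a)
    (hGu : Gu = Matrix.of fun a b => tgrad (fun y => u y b) n x a) :
    fderiv ℝ (fun y => divGamma u n y) x (n x)
        - divGamma (fun y => fderiv ℝ u y (n y)) n x
      = -Matrix.trace (R * Gu) := by
  clear hunit htang
  have hua : ∀ a, ContDiff ℝ (⊤ : ℕ∞) (fun y => u y a) := fun a => contDiff_pi.mp hu a
  have hna : ∀ a, ContDiff ℝ (⊤ : ℕ∞) (fun y => n y a) := fun a => contDiff_pi.mp hn a
  have huad : ∀ a y, DifferentiableAt ℝ (fun z => u z a) y :=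
    fun a y => ((hua a).differentiable (by simp)) y
  have hnad : ∀ a y, DifferentiableAt ℝ (fun z => n z a) y :=
    fun a y => ((hna a).differentiable (by simp)) y
  have hQc : ∀ a b, ContDiff ℝ (⊤ : ℕ∞) (pd (fun z => u z a) b) := fun a b => contDiff_pd (hua a) b
  have hQd : ∀ a b, DifferentiableAt ℝ (pd (fun z => u z a) b) x :=
    fun a b => ((hQc a b).differentiable (by simp)) x
  have hQ_eq : ∀ a b (y : Fin 3 → ℝ), fderiv ℝ u y (Pi.single b 1) a = pd (fun z => u z a) b y :=
    fun a b y => fderiv_pi_apply (fun c => huad c y) _ a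
  have hN_eq : ∀ b (y r : Fin 3 → ℝ), fderiv ℝ n y r b = fderiv ℝ (fun z => n z b) y r :=
    fun b y r => fderiv_pi_apply (fun c => hnad c y) r b
  have hnx0 : ∀ b, fderiv ℝ (fun z => n z b) x (n x) = 0 := by
    intro b
    rw [← hN_eq, hnn]
    rfl
  have hnx0' : ∀ b, (∑ c, n x c * fderiv ℝ (fun z => n z b) x (Pi.single c 1)) = 0 := by
    intro b
    have h := clm_expand (fderiv ℝ (fun z => n z b) x) (n x)
    simp only [smul_eq_mul] at h
    rw [← h, hnx0]
  have hQexp : ∀ a (y : Fin 3 → ℝ),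
      fderiv ℝ u y (n y) a = ∑ b, n y b * pd (fun z => u z a) b y := by
    intro a y
    have h := clm_expand (fderiv ℝ u y) (n y)
    rw [h]
    simp only [Finset.sum_apply, Pi.smul_apply, smul_eq_mul]
    exact Finset.sum_congr rfl fun b _ => by rw [hQ_eq]
  -- Step A : rewrite `divGamma u n` as an explicit function
  have hGfun : divGamma u n = fun y =>
      (∑ i, pd (fun z => u z i) i y)
        - ∑ a, ((∑ b, n y b * pd (fun z => u z a) b y) * n y a) := by
    funext y
    simp only [divGamma, div3, dotProduct]
    congr 1
    exact Finset.sum_congr rfl fun a _ => by rw [hQexp]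
  have hSd : ∀ a, DifferentiableAt ℝ (fun y => ∑ b, n y b * pd (fun z => u z a) b y) x :=
    fun a => DifferentiableAt.fun_sum fun b _ => (hnad b x).mul (hQd a b)
  have hTd : ∀ a, DifferentiableAt ℝ
      (fun y => (∑ b, n y b * pd (fun z => u z a) b y) * n y a) x :=
    fun a => (hSd a).mul (hnad a x)
  -- Step B : first term of the LHS
  have hB : fderiv ℝ (fun y => divGamma u n y) x (n x)
      = (∑ i, fderiv ℝ (pd (fun z => u z i) i) x (n x))
        - ∑ a, n x a * ∑ b, n x b * fderiv ℝ (pd (fun z => u z a) b) x (n x) := by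
    have heta : (fun y => divGamma u n y) = divGamma u n := rfl
    rw [heta, hGfun]
    rw [fderiv_fun_sub (DifferentiableAt.fun_sum fun i _ => hQd i i) (DifferentiableAt.fun_sum fun a _ => hTd a)]
    rw [ContinuousLinearMap.sub_apply]
    congr 1
    · exact fderiv_sum_apply3 fun i => hQd i i
    · rw [fderiv_sum_apply3 hTd]
      refine Finset.sum_congr rfl fun a _ => ?_
      rw [fderiv_mul_apply (hSd a) (hnad a x), hnx0 a, mul_zero, zero_add]
      rw [fderiv_sum_apply3 (fun b => (hnad b x).fun_mul (hQd a b))]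
      congr 1
      refine Finset.sum_congr rfl fun b _ => ?_
      rw [fderiv_mul_apply (hnad b x) (hQd a b), hnx0 b, mul_zero, add_zero]
  -- Step C : second term of the LHS
  have hw_comp : ∀ a, (fun y => fderiv ℝ u y (n y) a)
      = fun y => ∑ b, n y b * pd (fun z => u z a) b y := by
    intro a; funext y; exact hQexp a y
  have hwd : ∀ a (y : Fin 3 → ℝ), DifferentiableAt ℝ (fun z => fderiv ℝ u z (n z) a) y := by
    intro a y
    rw [hw_comp a]
    exact DifferentiableAt.fun_sum fun b _ => (hnad b y).mul (((hQc a b).differentiable (by simp)) y)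
  have hC : divGamma (fun y => fderiv ℝ u y (n y)) n x
      = (∑ a, ∑ b, (fderiv ℝ (fun z => n z b) x (Pi.single a 1) * pd (fun z => u z a) b x
            + n x b * fderiv ℝ (pd (fun z => u z a) b) x (Pi.single a 1)))
        - ∑ a, n x a * ∑ b, n x b * fderiv ℝ (pd (fun z => u z a) b) x (n x) := by
    simp only [divGamma, div3, dotProduct]
    congr 1
    · refine Finset.sum_congr rfl fun a _ => ?_
      show fderiv ℝ (fun y => fderiv ℝ u y (n y) a) x (Pi.single a 1) = _
      rw [hw_comp a]
      rw [fderiv_sum_apply3 (fun b => (hnad b x).fun_mul (hQd a b))]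
      refine Finset.sum_congr rfl fun b _ => ?_
      rw [fderiv_mul_apply (hnad b x) (hQd a b)]
      ring
    · refine Finset.sum_congr rfl fun a _ => ?_
      have h1 : fderiv ℝ (fun y => fderiv ℝ u y (n y)) x (n x) a
          = fderiv ℝ (fun y => fderiv ℝ u y (n y) a) x (n x) :=
        fderiv_pi_apply (fun c => hwd c x) _ a
      rw [h1, hw_comp a, fderiv_sum_apply3 (fun b => (hnad b x).fun_mul (hQd a b))]
      have h2 : ∑ b, fderiv ℝ (fun y => n y b * pd (fun z => u z a) b y) x (n x)
          = ∑ b, n x b * fderiv ℝ (pd (fun z => u z a) b) x (n x) := by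
        refine Finset.sum_congr rfl fun b _ => ?_
        rw [fderiv_mul_apply (hnad b x) (hQd a b), hnx0 b, mul_zero, add_zero]
      rw [h2, mul_comm]
  -- Step D : combine, using Schwarz symmetry
  have hswap : ∀ i, fderiv ℝ (pd (fun z => u z i) i) x (n x)
      = ∑ c, n x c * fderiv ℝ (pd (fun z => u z i) c) x (Pi.single i 1) := by
    intro i
    have h := clm_expand (fderiv ℝ (pd (fun z => u z i) i) x) (n x)
    simp only [smul_eq_mul] at h
    rw [h]
    exact Finset.sum_congr rfl fun c _ => by rw [schwarz_pd' (hua i) x i c]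
  have hLHS : fderiv ℝ (fun y => divGamma u n y) x (n x)
        - divGamma (fun y => fderiv ℝ u y (n y)) n x
      = -∑ a, ∑ b, fderiv ℝ (fun z => n z b) x (Pi.single a 1) * pd (fun z => u z a) b x := by
    rw [hB, hC]
    have h3 : ∑ i, fderiv ℝ (pd (fun z => u z i) i) x (n x)
        = ∑ a, ∑ b, n x b * fderiv ℝ (pd (fun z => u z a) b) x (Pi.single a 1) := by
      refine Finset.sum_congr rfl fun i _ => ?_
      rw [hswap i]
    rw [h3]
    simp only [Finset.sum_add_distrib]
    ring
  rw [hLHS]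
  -- Step E : compute the trace on the RHS
  have hRval : ∀ a c, R a c = fderiv ℝ (fun z => n z c) x (Pi.single a 1) := by
    intro a c
    rw [hR]
    simp only [Matrix.of_apply, tgrad, grad3, Pi.sub_apply, Pi.smul_apply, smul_eq_mul,
      dotProduct, pd]
    have h4 : ∑ d, fderiv ℝ (fun z => n z c) x (Pi.single d 1) * n x d = 0 := by
      rw [← hnx0' c]
      exact Finset.sum_congr rfl fun d _ => mul_comm _ _
    rw [h4]
    ring
  have hGuval : ∀ c a, Gu c a = pd (fun z => u z a) c x
      - (∑ d, pd (fun z => u z a) d x * n x d) * n x c := by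
    intro c a
    rw [hGu]
    simp only [Matrix.of_apply, tgrad, grad3, Pi.sub_apply, Pi.smul_apply, smul_eq_mul,
      dotProduct]
  have htr : Matrix.trace (R * Gu)
      = ∑ a, ∑ c, fderiv ℝ (fun z => n z c) x (Pi.single a 1) * pd (fun z => u z a) c x := by
    rw [Matrix.trace]
    simp only [Matrix.diag_apply, Matrix.mul_apply]
    refine Finset.sum_congr rfl fun a _ => ?_
    have hstep : ∑ c, R a c * Gu c a
        = ∑ c, fderiv ℝ (fun z => n z c) x (Pi.single a 1)
            * (pd (fun z => u z a) c x - (∑ d, pd (fun z => u z a) d x * n x d) * n x c) :=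
      Finset.sum_congr rfl fun c _ => by rw [hRval a c, hGuval c a]
    rw [hstep]
    have h6 : ∀ c, fderiv ℝ (fun z => n z c) x (Pi.single a 1)
        = fderiv ℝ (fun z => n z a) x (Pi.single c 1) := by
      intro c
      rw [← hN_eq, ← hN_eq]
      exact hsymm c a
    have h7 : ∑ c, fderiv ℝ (fun z => n z c) x (Pi.single a 1)
        * ((∑ d, pd (fun z => u z a) d x * n x d) * n x c)
        = (∑ d, pd (fun z => u z a) d x * n x d)
          * ∑ c, n x c * fderiv ℝ (fun z => n z a) x (Pi.single c 1) := by
      rw [Finset.mul_sum]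
      refine Finset.sum_congr rfl fun c _ => ?_
      rw [h6 c]
      ring
    have h5 : ∑ c, fderiv ℝ (fun z => n z c) x (Pi.single a 1)
        * ((∑ d, pd (fun z => u z a) d x * n x d) * n x c) = 0 := by
      rw [h7, hnx0' a, mul_zero]
    have h8 : ∑ c, fderiv ℝ (fun z => n z c) x (Pi.single a 1)
        * (pd (fun z => u z a) c x - (∑ d, pd (fun z => u z a) d x * n x d) * n x c)
        = (∑ c, fderiv ℝ (fun z => n z c) x (Pi.single a 1) * pd (fun z => u z a) c x)
          - ∑ c, fderiv ℝ (fun z => n z c) x (Pi.single a 1)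
            * ((∑ d, pd (fun z => u z a) d x * n x d) * n x c) := by
      rw [← Finset.sum_sub_distrib]
      exact Finset.sum_congr rfl fun c _ => by ring
    rw [h8, h5, sub_zero]
  rw [htr]
end

section
/- For the fundamental solution G(κ,|x−y|) = e^{iκ|x−y|}/(4π|x−y|) of the Helmholtz equation, the first Gâteaux derivative at r = 0 in direction ξ of the deformed kernel (x,y) ↦ G(κ,|x+r(x)−y−r(y)|)·J_r(y) equals G(κ,|x−y|)·( ((ξ(x)−ξ(y))·(x−y)/|x−y|)·(iκ − 1/|x−y|) + div_Γ ξ(y) ) for x ≠ y. -/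
/-!
With `ρ(t) = |(x - y) + t (ξx - ξy)|`, the kernel is `G(κ, ρ t) · J t`. Since `x ≠ y`, `ρ` is
differentiable at `0` with `ρ'(0) = (ξx - ξy)·(x - y)/|x - y|`, and `G'(r) = G(r) (iκ - 1/r)`
for `r ≠ 0`; the chain rule and the product rule with `J 0 = 1` give the formula.
-/

open scoped RealInnerProductSpace

noncomputable def helmholtzKernel (κ : ℂ) (r : ℝ) : ℂ :=
  Complex.exp (Complex.I * κ * r) / ((4 * Real.pi * r : ℝ) : ℂ)

theorem hasDerivAt_helmholtzKernel (κ : ℂ) {r : ℝ} (hr : r ≠ 0) :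
    HasDerivAt (helmholtzKernel κ)
      (helmholtzKernel κ r * (Complex.I * κ - 1 / (r : ℂ))) r := by
  have hr' : (r : ℂ) ≠ 0 := Complex.ofReal_ne_zero.mpr hr
  have hexp : HasDerivAt (fun s : ℝ => Complex.exp (Complex.I * κ * s))
      (Complex.exp (Complex.I * κ * r) * (Complex.I * κ)) r := by
    simpa using (((hasDerivAt_id r).ofReal_comp).const_mul (Complex.I * κ)).cexp
  have hden : HasDerivAt (fun s : ℝ => ((4 * Real.pi * s : ℝ) : ℂ)) ((4 * Real.pi : ℝ) : ℂ) r := by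
    simpa using ((hasDerivAt_id r).const_mul (4 * Real.pi)).ofReal_comp
  refine (hexp.div hden (by simp [hr, Real.pi_ne_zero])).congr_deriv ?_
  simp only [helmholtzKernel]
  push_cast
  field_simp

theorem HasDerivAt.helmholtzKernel (κ : ℂ) {ρ : ℝ → ℝ} {ρ' t : ℝ} (hρ : HasDerivAt ρ ρ' t)
    (h : ρ t ≠ 0) :
    HasDerivAt (fun s => helmholtzKernel κ (ρ s))
      (helmholtzKernel κ (ρ t) * (ρ' * (Complex.I * κ - 1 / (ρ t : ℂ)))) t := by
  refine ((hasDerivAt_helmholtzKernel κ h).scomp t hρ).congr_deriv ?_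
  rw [Complex.real_smul]
  ring

theorem hasDerivAt_norm_add_smul {F : Type*} [NormedAddCommGroup F] [InnerProductSpace ℝ F]
    {a : F} (ha : a ≠ 0) (v : F) :
    HasDerivAt (fun t : ℝ => ‖a + t • v‖) (⟪a, v⟫ / ‖a‖) 0 := by
  have hray : HasDerivAt (fun t : ℝ => a + t • v) v 0 := by
    simpa using ((hasDerivAt_id (0 : ℝ)).smul_const v).const_add a
  convert hray.norm_sq.sqrt (by simpa using ha) using 1
  · simp only [Real.sqrt_sq (norm_nonneg _)]
  · rw [zero_smul, add_zero, Real.sqrt_sq (norm_nonneg _)]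
    field_simp

theorem sqrt_sum_sq_eq_norm_toLp {ι : Type*} [Fintype ι] (v : ι → ℝ) :
    √(∑ i, v i ^ 2) = ‖WithLp.toLp 2 v‖ := by
  simp [EuclideanSpace.norm_eq]

theorem stmt15_general (κ : ℂ) (x y ξx ξy : Fin 3 → ℝ) (hxy : x ≠ y)
    (J : ℝ → ℝ) (divξy : ℝ) (hJ0 : J 0 = 1) (hJ : HasDerivAt J divξy 0)
    (nrm : (Fin 3 → ℝ) → ℝ)
    (hnrm : ∀ v, nrm v = Real.sqrt (∑ i, v i ^ 2)) :
    HasDerivAt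
      (fun t : ℝ =>
        Complex.exp (Complex.I * κ * (nrm (x + t • ξx - (y + t • ξy)) : ℝ)) /
            ((4 * Real.pi * nrm (x + t • ξx - (y + t • ξy)) : ℝ) : ℂ) * (J t : ℂ))
      (Complex.exp (Complex.I * κ * (nrm (x - y) : ℝ)) /
          ((4 * Real.pi * nrm (x - y) : ℝ) : ℂ) *
        ((((ξx - ξy) ⬝ᵥ (x - y) / nrm (x - y) : ℝ) : ℂ) *
            (Complex.I * κ - 1 / ((nrm (x - y) : ℝ) : ℂ)) + (divξy : ℂ)))
      0 := by
  have ha : WithLp.toLp 2 (x - y) ≠ 0 := by simpa [sub_eq_zero] using hxy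
  have hnorm : ∀ v, nrm v = ‖WithLp.toLp 2 v‖ := fun v => by rw [hnrm, sqrt_sum_sq_eq_norm_toLp]
  have hline : ∀ t : ℝ, x + t • ξx - (y + t • ξy) = (x - y) + t • (ξx - ξy) := fun t => by
    rw [smul_sub]; abel
  have hdist : HasDerivAt (fun t : ℝ => ‖WithLp.toLp 2 (x - y + t • (ξx - ξy))‖)
      ((ξx - ξy) ⬝ᵥ (x - y) / ‖WithLp.toLp 2 (x - y)‖) 0 := by
    simpa only [WithLp.toLp_add, WithLp.toLp_smul, EuclideanSpace.inner_toLp_toLp, star_trivial]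
      using hasDerivAt_norm_add_smul ha (WithLp.toLp 2 (ξx - ξy))
  have hJC : HasDerivAt (fun t => (J t : ℂ)) divξy 0 := hJ.ofReal_comp
  simp only [hnorm, hline]
  refine ((hdist.helmholtzKernel κ ?_).mul hJC).congr_deriv ?_
  · simpa using ha
  rw [hJ0, Complex.ofReal_one, mul_one, ← mul_add, zero_smul, add_zero]
  rfl

/-- Shape derivative of the deformed Helmholtz single-layer kernel:
for `x ≠ y` on `Γ`, with `J` the surface Jacobian along the deformation `tξ` at `y`
(so `J 0 = 1` and `J'(0) = div_Γ ξ(y)`), the map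
`t ↦ G(κ, |x + tξ(x) − y − tξ(y)|) · J t` is differentiable at `t = 0` with derivative
`G(κ,|x−y|) ( ((ξ(x)−ξ(y))·(x−y)/|x−y|)(iκ − 1/|x−y|) + div_Γ ξ(y) )`. -/
theorem stmt15 (κ : ℂ) (hκ : 0 ≤ κ.im) (x y ξx ξy : Fin 3 → ℝ) (hxy : x ≠ y)
    (J : ℝ → ℝ) (divξy : ℝ) (hJ0 : J 0 = 1) (hJ : HasDerivAt J divξy 0)
    (nrm : (Fin 3 → ℝ) → ℝ)
    (hnrm : ∀ v, nrm v = Real.sqrt (∑ i, v i ^ 2)) :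
    HasDerivAt
      (fun t : ℝ =>
        Complex.exp (Complex.I * κ * (nrm (x + t • ξx - (y + t • ξy)) : ℝ)) /
            ((4 * Real.pi * nrm (x + t • ξx - (y + t • ξy)) : ℝ) : ℂ) * (J t : ℂ))
      (Complex.exp (Complex.I * κ * (nrm (x - y) : ℝ)) /
          ((4 * Real.pi * nrm (x - y) : ℝ) : ℂ) *
        ((((ξx - ξy) ⬝ᵥ (x - y) / nrm (x - y) : ℝ) : ℂ) *
            (Complex.I * κ - 1 / ((nrm (x - y) : ℝ) : ℂ)) + (divξy : ℂ)))
      0 :=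
  stmt15_general κ x y ξx ξy hxy J divξy hJ0 hJ nrm hnrm
end
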